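/- arXiv:2304.09262 — 8 statements merged into one kernel-verified Lean document; each statement's English description precedes it below -/
import Mathlib

section
/- The nondisclosure price is strictly more sensitive to unfavorable than favorable news: with P(s,∅) defined piecewise as (q·s + (1-q)·K)/D₁ for s ≤ v̂ and (q(1-p)·s + (1-q)·K)/D₂ for s > v̂, where K = (1-p)μ + pG(v̂)·E[v|v≤v̂], D₁ = q+(1-q)(1-p+pG(v̂)), D₂ = q(1-p)+(1-q)(1-p+pG(v̂)), the slope in s on the region s ≤ v̂, namely q/D₁, is strictly greater than the slope on s > v̂, namely q(1-p)/D₂, and both are strictly positive. -/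
/-- The nondisclosure price is strictly more sensitive to unfavorable
news than to favorable news: its slope on the region s ≤ v̂ is q/D₁, its slope on
s > v̂ is q(1-p)/D₂, and q/D₁ > q(1-p)/D₂ > 0. -/
theorem price_asymmetric_sensitivity
    (p q Gv μ Ev : ℝ)
    (hp : p ∈ Set.Ioo (0:ℝ) 1) (hq : q ∈ Set.Ioo (0:ℝ) 1)
    (hG : Gv ∈ Set.Ioo (0:ℝ) 1) :
    let K : ℝ := (1 - p) * μ + p * Gv * Ev
    let D₁ : ℝ := q + (1 - q) * (1 - p + p * Gv)
    let D₂ : ℝ := q * (1 - p) + (1 - q) * (1 - p + p * Gv)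
    (∀ s : ℝ, HasDerivAt (fun s' => (q * s' + (1 - q) * K) / D₁) (q / D₁) s) ∧
    (∀ s : ℝ, HasDerivAt (fun s' => (q * (1 - p) * s' + (1 - q) * K) / D₂)
        (q * (1 - p) / D₂) s) ∧
    q / D₁ > q * (1 - p) / D₂ ∧ 0 < q * (1 - p) / D₂ := by

  obtain ⟨hp0, hp1⟩ := hp
  obtain ⟨hq0, hq1⟩ := hq
  obtain ⟨hG0, hG1⟩ := hG
  intro K D₁ D₂
  have hA : 0 < 1 - p + p * Gv := by nlinarith
  have hD1 : 0 < D₁ := by simp only [D₁]; nlinarith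
  have hD2 : 0 < D₂ := by simp only [D₂]; nlinarith
  refine ⟨?_, ?_, ?_, ?_⟩
  · intro s
    have h := ((hasDerivAt_id s).const_mul q |>.add_const ((1 - q) * K)).div_const D₁
    simpa using h
  · intro s
    have h := ((hasDerivAt_id s).const_mul (q * (1 - p)) |>.add_const ((1 - q) * K)).div_const D₂
    simpa using h
  · rw [gt_iff_lt, div_lt_div_iff₀ hD2 hD1]
    simp only [D₁, D₂]; nlinarith [mul_pos (mul_pos hq0 (sub_pos.2 hq1)) (mul_pos hp0 hA)]
  · apply div_pos ?_ hD2; nlinarith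
end

section
/- The nondisclosure price has a downward jump at s = v̂ if and only if E[v | v ≤ v̂] conditional on nondisclosure is below v̂, i.e., the left limit lim_{s→v̂⁻} P(s,∅) = (q·v̂+(1-q)K)/D₁ exceeds the right limit lim_{s→v̂⁺} P(s,∅) = (q(1-p)·v̂+(1-q)K)/D₂ if and only if v̂ > K/(1-p+pG(v̂)), where K = (1-p)μ + pG(v̂)·E[v|v≤v̂], D₁ = q+(1-q)(1-p+pG(v̂)), D₂ = q(1-p)+(1-q)(1-p+pG(v̂)). -/
/-- The nondisclosure price has a downward jump at s = v̂ iff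
v̂ exceeds the Dye benchmark nondisclosure price K/(1-p+pG(v̂)). -/
theorem price_downward_jump_iff
    (p q Gv μ Ev vhat : ℝ)
    (hp : p ∈ Set.Ioo (0:ℝ) 1) (hq : q ∈ Set.Ioo (0:ℝ) 1)
    (hG : Gv ∈ Set.Ioo (0:ℝ) 1) :
    let K : ℝ := (1 - p) * μ + p * Gv * Ev
    let D₁ : ℝ := q + (1 - q) * (1 - p + p * Gv)
    let D₂ : ℝ := q * (1 - p) + (1 - q) * (1 - p + p * Gv)
    (q * vhat + (1 - q) * K) / D₁ > (q * (1 - p) * vhat + (1 - q) * K) / D₂ ↔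
      vhat > K / (1 - p + p * Gv) := by
  obtain ⟨hp0, hp1⟩ := hp
  obtain ⟨hq0, hq1⟩ := hq
  obtain ⟨hG0, hG1⟩ := hG
  intro K D₁ D₂
  have hA : (0:ℝ) < 1 - p + p * Gv := by nlinarith
  have hD1 : (0:ℝ) < D₁ := by simp only [D₁]; nlinarith
  have hD2 : (0:ℝ) < D₂ := by simp only [D₂]; nlinarith
  rw [gt_iff_lt, div_lt_div_iff₀ hD2 hD1, gt_iff_lt, div_lt_iff₀ hA]
  constructor <;> intro h <;> simp only [D₁, D₂] at * <;> nlinarith [mul_pos hq0 (mul_pos hp0 (sub_pos.mpr hq1))]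
end

section
/- In the Dye benchmark, there exists a unique v^B ∈ (v_min, μ) solving v = ((1-p)μ + p∫_{v_min}^{v} t g(t) dt)/((1-p)+pG(v)), and this v^B is strictly decreasing in p. -/
open intervalIntegral

/-- In the Dye benchmark there is a unique threshold v^B ∈ (v_min, μ)
solving the indifference condition, and it is strictly decreasing in p. -/
theorem dye_benchmark_threshold
    (vmin vmax : ℝ) (hv : vmin < vmax)
    (g : ℝ → ℝ)
    (hg_cont : ContinuousOn g (Set.Icc vmin vmax))
    (hg_pos : ∀ x ∈ Set.Icc vmin vmax, 0 < g x)
    (hg_density : ∫ t in vmin..vmax, g t = 1)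
    (G : ℝ → ℝ) (hG : ∀ v, G v = ∫ t in vmin..v, g t)
    (μ : ℝ) (hμ : μ = ∫ t in vmin..vmax, t * g t) :
    (∀ p ∈ Set.Ioo (0:ℝ) 1,
      ∃! vB, vB ∈ Set.Ioo vmin μ ∧
        vB * ((1 - p) + p * G vB) = (1 - p) * μ + p * ∫ t in vmin..vB, t * g t) ∧
    (∀ p₁ ∈ Set.Ioo (0:ℝ) 1, ∀ p₂ ∈ Set.Ioo (0:ℝ) 1, p₁ < p₂ →
      ∀ vB₁ vB₂ : ℝ,
        vB₁ ∈ Set.Ioo vmin μ →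
        vB₁ * ((1 - p₁) + p₁ * G vB₁) = (1 - p₁) * μ + p₁ * ∫ t in vmin..vB₁, t * g t →
        vB₂ ∈ Set.Ioo vmin μ →
        vB₂ * ((1 - p₂) + p₂ * G vB₂) = (1 - p₂) * μ + p₂ * ∫ t in vmin..vB₂, t * g t →
        vB₂ < vB₁) := by
  have hmin : vmin ∈ Set.Icc vmin vmax := ⟨le_rfl, hv.le⟩
  have hmax : vmax ∈ Set.Icc vmin vmax := ⟨hv.le, le_rfl⟩
  -- integrability
  have hgi : ∀ a ∈ Set.Icc vmin vmax, ∀ b ∈ Set.Icc vmin vmax,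
      IntervalIntegrable g MeasureTheory.volume a b := fun a ha b hb =>
    (hg_cont.mono (Set.uIcc_subset_Icc ha hb)).intervalIntegrable
  have htgi : ∀ a ∈ Set.Icc vmin vmax, ∀ b ∈ Set.Icc vmin vmax,
      IntervalIntegrable (fun t => t * g t) MeasureTheory.volume a b := fun a ha b hb =>
    ((continuousOn_id.mul hg_cont).mono (Set.uIcc_subset_Icc ha hb)).intervalIntegrable
  have hcgi : ∀ c : ℝ, ∀ a ∈ Set.Icc vmin vmax, ∀ b ∈ Set.Icc vmin vmax,
      IntervalIntegrable (fun t => (c - t) * g t) MeasureTheory.volume a b := fun c a ha b hb =>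
    (((continuousOn_const.sub continuousOn_id).mul hg_cont).mono
      (Set.uIcc_subset_Icc ha hb)).intervalIntegrable
  -- splitting (c - t) * g t integrals
  have hsplit : ∀ c : ℝ, ∀ a ∈ Set.Icc vmin vmax, ∀ b ∈ Set.Icc vmin vmax,
      (∫ t in a..b, (c - t) * g t)
        = c * (∫ t in a..b, g t) - ∫ t in a..b, t * g t := by
    intro c a ha b hb
    simp only [sub_mul]
    rw [intervalIntegral.integral_sub ((hgi a ha b hb).const_mul c) (htgi a ha b hb),
      intervalIntegral.integral_const_mul]
  -- μ bounds
  have hμ_gt : vmin < μ := by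
    have hpos : 0 < ∫ t in vmin..vmax, (t - vmin) * g t := by
      apply intervalIntegral_pos_of_pos_on
      · exact (((continuousOn_id.sub continuousOn_const).mul hg_cont).mono
          (Set.uIcc_subset_Icc hmin hmax)).intervalIntegrable
      · intro x hx
        exact mul_pos (sub_pos.2 hx.1) (hg_pos x ⟨hx.1.le, hx.2.le⟩)
      · exact hv
    have h1 : (∫ t in vmin..vmax, (t - vmin) * g t)
        = (∫ t in vmin..vmax, t * g t) - vmin * ∫ t in vmin..vmax, g t := by
      simp only [sub_mul]
      rw [intervalIntegral.integral_sub (htgi vmin hmin vmax hmax)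
        ((hgi vmin hmin vmax hmax).const_mul vmin), intervalIntegral.integral_const_mul]
    rw [h1, hg_density, ← hμ] at hpos
    linarith
  have hμ_le : μ ≤ vmax := by
    have hnn : 0 ≤ ∫ t in vmin..vmax, (vmax - t) * g t := by
      apply intervalIntegral.integral_nonneg hv.le
      intro u hu
      exact mul_nonneg (sub_nonneg.2 hu.2) (hg_pos u hu).le
    rw [hsplit vmax vmin hmin vmax hmax, hg_density, ← hμ] at hnn
    linarith
  have hsubμ : Set.Icc vmin μ ⊆ Set.Icc vmin vmax := Set.Icc_subset_Icc le_rfl hμ_le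
  -- G facts
  have hG0 : G vmin = 0 := by rw [hG]; exact intervalIntegral.integral_same
  have hI0 : (∫ t in vmin..vmin, t * g t) = 0 := intervalIntegral.integral_same
  have hGnn : ∀ a ∈ Set.Icc vmin vmax, 0 ≤ G a := by
    intro a ha
    rw [hG]
    exact intervalIntegral.integral_nonneg ha.1
      (fun u hu => (hg_pos u ⟨hu.1, hu.2.trans ha.2⟩).le)
  -- key difference identity for H v = v * G v - ∫ t g
  have hdiff : ∀ a ∈ Set.Icc vmin vmax, ∀ b ∈ Set.Icc vmin vmax,
      (b * G b - ∫ t in vmin..b, t * g t) - (a * G a - ∫ t in vmin..a, t * g t)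
        = (∫ t in a..b, (b - t) * g t) + (b - a) * G a := by
    intro a ha b hb
    have hGb : G b = G a + ∫ t in a..b, g t := by
      rw [hG, hG]
      exact (integral_add_adjacent_intervals (hgi vmin hmin a ha) (hgi a ha b hb)).symm
    have hIb : (∫ t in vmin..b, t * g t) = (∫ t in vmin..a, t * g t) + ∫ t in a..b, t * g t :=
      (integral_add_adjacent_intervals (htgi vmin hmin a ha) (htgi a ha b hb)).symm
    rw [hGb, hIb, hsplit b a ha b hb]
    ring
  -- H is strictly positive above vmin
  have hHpos : ∀ v, vmin < v → v ≤ vmax → 0 < v * G v - ∫ t in vmin..v, t * g t := by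
    intro v h1 h2
    have hvmem : v ∈ Set.Icc vmin vmax := ⟨h1.le, h2⟩
    have hd := hdiff vmin hmin v hvmem
    have hint : 0 < ∫ t in vmin..v, (v - t) * g t := by
      apply intervalIntegral_pos_of_pos_on (hcgi v vmin hmin v hvmem)
      · intro x hx
        exact mul_pos (sub_pos.2 hx.2) (hg_pos x ⟨hx.1.le, hx.2.le.trans h2⟩)
      · exact h1
    rw [hG0, hI0] at hd
    nlinarith
  -- H is monotone (nonneg increments)
  have hHmono : ∀ a ∈ Set.Icc vmin vmax, ∀ b ∈ Set.Icc vmin vmax, a ≤ b →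
      (a * G a - ∫ t in vmin..a, t * g t) ≤ b * G b - ∫ t in vmin..b, t * g t := by
    intro a ha b hb hab
    have hd := hdiff a ha b hb
    have hint : 0 ≤ ∫ t in a..b, (b - t) * g t := by
      apply intervalIntegral.integral_nonneg hab
      intro u hu
      exact mul_nonneg (sub_nonneg.2 hu.2)
        (hg_pos u ⟨ha.1.trans hu.1, hu.2.trans hb.2⟩).le
    nlinarith [mul_nonneg (sub_nonneg.2 hab) (hGnn a ha)]
  -- rewrite the equation as F p v = 0 with F p v = (1-p)(v-μ) + p H v
  have hFeq : ∀ p v : ℝ,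
      (v * ((1 - p) + p * G v) = (1 - p) * μ + p * ∫ t in vmin..v, t * g t) ↔
      (1 - p) * (v - μ) + p * (v * G v - ∫ t in vmin..v, t * g t) = 0 := by
    intro p v
    constructor <;> intro h <;> linarith [h]
  -- strict monotonicity of F in v
  have hFmono : ∀ p : ℝ, 0 < p → p < 1 → ∀ a ∈ Set.Icc vmin vmax, ∀ b ∈ Set.Icc vmin vmax,
      a < b →
      (1 - p) * (a - μ) + p * (a * G a - ∫ t in vmin..a, t * g t)
        < (1 - p) * (b - μ) + p * (b * G b - ∫ t in vmin..b, t * g t) := by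
    intro p hp0 hp1 a ha b hb hab
    have h1 := hHmono a ha b hb hab.le
    nlinarith [mul_pos (sub_pos.2 hp1) (sub_pos.2 hab),
      mul_le_mul_of_nonneg_left h1 hp0.le]
  -- continuity of v ↦ F p v
  have hGcont : ContinuousOn G (Set.Icc vmin vmax) := by
    have h1 : ContinuousOn (fun x => ∫ t in vmin..x, g t) (Set.uIcc vmin vmax) :=
      continuousOn_primitive_interval' (hgi vmin hmin vmax hmax) Set.left_mem_uIcc
    rw [Set.uIcc_of_le hv.le] at h1
    exact h1.congr (fun x _ => hG x)
  have hIcont : ContinuousOn (fun v => ∫ t in vmin..v, t * g t) (Set.Icc vmin vmax) := by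
    have h1 : ContinuousOn (fun x => ∫ t in vmin..x, t * g t) (Set.uIcc vmin vmax) :=
      continuousOn_primitive_interval' (htgi vmin hmin vmax hmax) Set.left_mem_uIcc
    rwa [Set.uIcc_of_le hv.le] at h1
  constructor
  · -- existence and uniqueness
    rintro p ⟨hp0, hp1⟩
    have hFcont : ContinuousOn
        (fun v => (1 - p) * (v - μ) + p * (v * G v - ∫ t in vmin..v, t * g t))
        (Set.Icc vmin μ) := by
      apply ContinuousOn.add
      · exact continuousOn_const.mul (continuousOn_id.sub continuousOn_const)
      · exact continuousOn_const.mul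
          ((continuousOn_id.mul (hGcont.mono hsubμ)).sub (hIcont.mono hsubμ))
    have hFa : (1 - p) * (vmin - μ) + p * (vmin * G vmin - ∫ t in vmin..vmin, t * g t)
        = (1 - p) * (vmin - μ) := by rw [hG0, hI0]; ring
    have hFb : 0 < (1 - p) * (μ - μ) + p * (μ * G μ - ∫ t in vmin..μ, t * g t) := by
      have := hHpos μ hμ_gt hμ_le
      nlinarith
    have hFaneg : (1 - p) * (vmin - μ) + p * (vmin * G vmin - ∫ t in vmin..vmin, t * g t) < 0 := by
      rw [hFa]; nlinarith
    have hivt := intermediate_value_Ioo hμ_gt.le hFcont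
    have h0mem : (0:ℝ) ∈ Set.Ioo
        ((1 - p) * (vmin - μ) + p * (vmin * G vmin - ∫ t in vmin..vmin, t * g t))
        ((1 - p) * (μ - μ) + p * (μ * G μ - ∫ t in vmin..μ, t * g t)) := ⟨hFaneg, hFb⟩
    obtain ⟨vB, hvB, hFvB'⟩ := hivt h0mem
    have hFvB : (1 - p) * (vB - μ) + p * (vB * G vB - ∫ t in vmin..vB, t * g t) = 0 := hFvB'
    refine ⟨vB, ⟨hvB, (hFeq p vB).2 hFvB⟩, ?_⟩
    rintro y ⟨hy, hyeq⟩
    have hFy : (1 - p) * (y - μ) + p * (y * G y - ∫ t in vmin..y, t * g t) = 0 :=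
      (hFeq p y).1 hyeq
    have hymem : y ∈ Set.Icc vmin vmax := hsubμ ⟨hy.1.le, hy.2.le⟩
    have hvmem : vB ∈ Set.Icc vmin vmax := hsubμ ⟨hvB.1.le, hvB.2.le⟩
    rcases lt_trichotomy y vB with h | h | h
    · have := hFmono p hp0 hp1 y hymem vB hvmem h
      rw [hFy, hFvB] at this; exact absurd this (lt_irrefl 0)
    · exact h
    · have := hFmono p hp0 hp1 vB hvmem y hymem h
      rw [hFy, hFvB] at this; exact absurd this (lt_irrefl 0)
  · -- strict decrease in p
    rintro p₁ ⟨hp10, hp11⟩ p₂ ⟨hp20, hp21⟩ hpp vB₁ vB₂ hv1 heq1 hv2 heq2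
    have hF1 : (1 - p₁) * (vB₁ - μ) + p₁ * (vB₁ * G vB₁ - ∫ t in vmin..vB₁, t * g t) = 0 :=
      (hFeq p₁ vB₁).1 heq1
    have hF2 : (1 - p₂) * (vB₂ - μ) + p₂ * (vB₂ * G vB₂ - ∫ t in vmin..vB₂, t * g t) = 0 :=
      (hFeq p₂ vB₂).1 heq2
    have h1mem : vB₁ ∈ Set.Icc vmin vmax := hsubμ ⟨hv1.1.le, hv1.2.le⟩
    have h2mem : vB₂ ∈ Set.Icc vmin vmax := hsubμ ⟨hv2.1.le, hv2.2.le⟩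
    have hH1 : 0 < vB₁ * G vB₁ - ∫ t in vmin..vB₁, t * g t :=
      hHpos vB₁ hv1.1 h1mem.2
    -- F p₂ vB₁ > 0
    have hFp2v1 : 0 < (1 - p₂) * (vB₁ - μ) + p₂ * (vB₁ * G vB₁ - ∫ t in vmin..vB₁, t * g t) := by
      nlinarith [hv1.2, sub_pos.2 hpp]
    by_contra hcon
    push_neg at hcon
    rcases eq_or_lt_of_le hcon with h | h
    · rw [← h] at hF2
      linarith
    · have := hFmono p₂ hp20 hp21 vB₁ h1mem vB₂ h2mem h
      rw [hF2] at this
      linarith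
end

section
/- If g is a log-concave density on [v_min, v_max], then the truncated mean m(v̄) = E[v | v ≤ v̄] = (∫_{v_min}^{v̄} t g(t) dt)/G(v̄) is differentiable and satisfies 0 < m'(v̄) < 1 for v̄ ∈ (v_min, v_max). -/
/-!
By the quotient rule and an integration by parts, with `G v = ∫_c^v g`,
`m' v = g v * (∫_c^v G) / (G v)²`, which is clearly positive. Log-concavity gives
`g b * g t ≤ g a * g (t + (b - a))` for `t ≤ a < b`; integrating over `t ∈ [c, a]` shows that the
reverse hazard rate `g / G` is strictly decreasing. Hence `g v * G t < g t * G v` for `t < v`, and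
integrating in `t` gives `g v * ∫_c^v G < (G v)²`, i.e. `m' v < 1`.
-/

open Set intervalIntegral

def LogConcaveOn (s : Set ℝ) (g : ℝ → ℝ) : Prop :=
  ∀ x ∈ s, ∀ y ∈ s, ∀ a b : ℝ, 0 ≤ a → 0 ≤ b → a + b = 1 →
    g x ^ a * g y ^ b ≤ g (a * x + b * y)

noncomputable def truncatedMean (g : ℝ → ℝ) (c v : ℝ) : ℝ :=
  (∫ t in c..v, t * g t) / ∫ t in c..v, g t

/-- Write `a = λ x + μ y` and `x + y - a = μ x + λ y`; the two log-concavity inequalities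
multiply to the claim since `λ + μ = 1`. -/
theorem LogConcaveOn.mul_le_mul_add_sub {s : Set ℝ} {g : ℝ → ℝ} (hg : LogConcaveOn s g)
    {x y a : ℝ} (hx : x ∈ s) (hy : y ∈ s) (hgx : 0 < g x) (hgy : 0 < g y)
    (hxa : x ≤ a) (hay : a < y) :
    g x * g y ≤ g a * g (x + (y - a)) := by
  have hxy : 0 < y - x := by linarith
  set lam := (y - a) / (y - x)
  set mu := (a - x) / (y - x)
  have hlam : 0 ≤ lam := div_nonneg (by linarith) hxy.le
  have hmu : 0 ≤ mu := div_nonneg (by linarith) hxy.le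
  have hsum : lam + mu = 1 := by
    rw [← add_div, div_eq_one_iff_eq hxy.ne']
    ring
  have ha : lam * x + mu * y = a := by simp only [lam, mu]; field_simp; ring
  have ha' : mu * x + lam * y = x + (y - a) := by simp only [lam, mu]; field_simp; ring
  have h₁ := hg x hx y hy lam mu hlam hmu hsum
  have h₂ := hg x hx y hy mu lam hmu hlam (by linarith)
  rw [ha] at h₁
  rw [ha'] at h₂
  have hga : 0 ≤ g a := (by positivity : (0 : ℝ) ≤ g x ^ lam * g y ^ mu).trans h₁
  calc g x * g y = (g x ^ lam * g y ^ mu) * (g x ^ mu * g y ^ lam) := by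
        rw [mul_mul_mul_comm, ← Real.rpow_add hgx, ← Real.rpow_add hgy, hsum, add_comm,
          hsum, Real.rpow_one, Real.rpow_one]
    _ ≤ g a * g (x + (y - a)) := by gcongr

section Interval

variable {g : ℝ → ℝ} {c d : ℝ}

theorem integral_pos_of_continuousOn_of_pos (hg : ContinuousOn g (Icc c d))
    (hpos : ∀ x ∈ Icc c d, 0 < g x) {v : ℝ} (hcv : c < v) (hvd : v ≤ d) :
    0 < ∫ t in c..v, g t :=
  intervalIntegral_pos_of_pos_on
    ((hg.mono (Icc_subset_Icc_right hvd)).intervalIntegrable_of_Icc hcv.le)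
    (fun x hx => hpos x ⟨hx.1.le, hx.2.le.trans hvd⟩) hcv

theorem hasDerivAt_integral_of_continuousOn (hg : ContinuousOn g (Icc c d)) {v : ℝ}
    (hv : v ∈ Ioo c d) :
    HasDerivAt (fun w => ∫ t in c..w, g t) (g v) v :=
  integral_hasDerivAt_right
    ((hg.mono (Icc_subset_Icc_right hv.2.le)).intervalIntegrable_of_Icc hv.1.le)
    ((hg.mono Ioo_subset_Icc_self).stronglyMeasurableAtFilter isOpen_Ioo v hv)
    (hg.continuousAt (Icc_mem_nhds hv.1 hv.2))

theorem continuousOn_primitive_of_continuousOn (hg : ContinuousOn g (Icc c d)) (hcd : c ≤ d) :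
    ContinuousOn (fun x => ∫ t in c..x, g t) (Icc c d) := by
  have h := continuousOn_primitive_interval (μ := MeasureTheory.volume) (a := c) (b := d) (f := g)
  rw [uIcc_of_le hcd] at h
  exact h hg.integrableOn_Icc

/-- Integration by parts against `t ↦ t`. -/
theorem integral_primitive_eq (hg : ContinuousOn g (Icc c d)) (hcd : c ≤ d) :
    ∫ x in c..d, (∫ t in c..x, g t) = d * (∫ t in c..d, g t) - ∫ t in c..d, t * g t := by
  have hIBP := integral_mul_deriv_eq_deriv_mul_of_hasDerivAt (u := fun x => ∫ t in c..x, g t)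
    (u' := g) (v := id) (v' := fun _ => 1)
    ?_ continuousOn_id ?_ (fun x _ => hasDerivAt_id x)
    (hg.intervalIntegrable_of_Icc hcd) intervalIntegrable_const
  · simpa [mul_comm] using hIBP
  · rw [uIcc_of_le hcd]
    exact continuousOn_primitive_of_continuousOn hg hcd
  · rw [min_eq_left hcd, max_eq_right hcd]
    exact fun x hx => hasDerivAt_integral_of_continuousOn hg hx

theorem integral_primitive_pos (hg : ContinuousOn g (Icc c d)) (hpos : ∀ x ∈ Icc c d, 0 < g x)
    {v : ℝ} (hcv : c < v) (hvd : v ≤ d) :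
    0 < ∫ x in c..v, (∫ t in c..x, g t) := by
  have hGv := continuousOn_primitive_of_continuousOn (hg.mono (Icc_subset_Icc_right hvd)) hcv.le
  exact intervalIntegral_pos_of_pos_on (hGv.intervalIntegrable_of_Icc hcv.le)
    (fun x hx => integral_pos_of_continuousOn_of_pos hg hpos hx.1 (hx.2.le.trans hvd)) hcv

theorem hasDerivAt_truncatedMean (hg : ContinuousOn g (Icc c d)) {v : ℝ} (hv : v ∈ Ioo c d)
    (hG : ∫ t in c..v, g t ≠ 0) :
    HasDerivAt (truncatedMean g c)
      (g v * (∫ x in c..v, ∫ t in c..x, g t) / (∫ t in c..v, g t) ^ 2) v := by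
  have hmoment : ContinuousOn (fun t => t * g t) (Icc c d) := continuousOn_id.mul hg
  have hquot := (hasDerivAt_integral_of_continuousOn hmoment hv).div
    (hasDerivAt_integral_of_continuousOn hg hv) hG
  rw [integral_primitive_eq (hg.mono (Icc_subset_Icc_right hv.2.le)) hv.1.le]
  exact hquot.congr_deriv (by ring)

theorem LogConcaveOn.mul_integral_lt_mul_integral (hlc : LogConcaveOn (Icc c d) g)
    (hg : ContinuousOn g (Icc c d)) (hpos : ∀ x ∈ Icc c d, 0 < g x)
    {a b : ℝ} (hca : c ≤ a) (hab : a < b) (hbd : b ≤ d) :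
    g b * (∫ t in c..a, g t) < g a * ∫ t in c..b, g t := by
  have hbI : b ∈ Icc c d := ⟨by linarith, hbd⟩
  have hint : ∀ {x y}, c ≤ x → x ≤ y → y ≤ d → IntervalIntegrable g MeasureTheory.volume x y :=
    fun hcx hxy hyd => (hg.mono (Icc_subset_Icc hcx hyd)).intervalIntegrable_of_Icc hxy
  have hshift : ContinuousOn (fun t => g (t + (b - a))) (Icc c a) :=
    hg.comp (continuous_add_const _).continuousOn fun t ht =>
      ⟨by linarith [ht.1], by linarith [ht.2]⟩
  have hsplit := integral_add_adjacent_intervals (hint le_rfl (by linarith) (by linarith))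
    (hint (by linarith) (by linarith) hbd) (a := c) (b := c + (b - a)) (c := b)
  have hhead : 0 < ∫ t in c..c + (b - a), g t :=
    integral_pos_of_continuousOn_of_pos hg hpos (by linarith) (by linarith)
  calc g b * (∫ t in c..a, g t) = ∫ t in c..a, g b * g t := (integral_const_mul _ _).symm
    _ ≤ ∫ t in c..a, g a * g (t + (b - a)) := by
      refine integral_mono_on hca ((hint le_rfl hca (by linarith)).const_mul _)
        ((hshift.intervalIntegrable_of_Icc hca).const_mul _) fun t ht => ?_
      have htI : t ∈ Icc c d := ⟨ht.1, by linarith [ht.2]⟩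
      rw [mul_comm]
      exact hlc.mul_le_mul_add_sub htI hbI (hpos t htI) (hpos b hbI) ht.2 hab
    _ = g a * ∫ t in c + (b - a)..b, g t := by
      rw [integral_const_mul, integral_comp_add_right, add_sub_cancel]
    _ < g a * ∫ t in c..b, g t := by
      gcongr
      · exact hpos a ⟨hca, by linarith⟩
      · linarith [hsplit, hhead]

theorem LogConcaveOn.mul_integral_primitive_lt_sq (hlc : LogConcaveOn (Icc c d) g)
    (hg : ContinuousOn g (Icc c d)) (hpos : ∀ x ∈ Icc c d, 0 < g x)
    {v : ℝ} (hcv : c < v) (hvd : v ≤ d) :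
    g v * (∫ x in c..v, ∫ t in c..x, g t) < (∫ t in c..v, g t) ^ 2 := by
  set G : ℝ → ℝ := fun x => ∫ t in c..x, g t
  have hgv : ContinuousOn g (Icc c v) := hg.mono (Icc_subset_Icc_right hvd)
  have hGv : ContinuousOn G (Icc c v) := continuousOn_primitive_of_continuousOn hgv hcv.le
  have hleft : ContinuousOn (fun x => g x * G v) (Icc c v) := hgv.mul continuousOn_const
  have hright : ContinuousOn (fun x => g v * G x) (Icc c v) := continuousOn_const.mul hGv
  have hdiff : ∫ x in c..v, (g x * G v - g v * G x) = G v ^ 2 - g v * ∫ x in c..v, G x := by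
    rw [integral_sub (hleft.intervalIntegrable_of_Icc hcv.le)
      (hright.intervalIntegrable_of_Icc hcv.le), integral_mul_const, integral_const_mul, sq]
  rw [← sub_pos, ← hdiff]
  refine intervalIntegral_pos_of_pos_on ((hleft.sub hright).intervalIntegrable_of_Icc hcv.le)
    (fun x hx => ?_) hcv
  exact sub_pos.2 (hlc.mul_integral_lt_mul_integral hg hpos hx.1.le hx.2 hvd)

end Interval

theorem truncated_mean_slope_general
    (vmin vmax : ℝ)
    (g : ℝ → ℝ)
    (hg_cont : ContinuousOn g (Set.Icc vmin vmax))
    (hg_pos : ∀ x ∈ Set.Icc vmin vmax, 0 < g x)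
    (hg_logconcave : ∀ x ∈ Set.Icc vmin vmax, ∀ y ∈ Set.Icc vmin vmax,
      ∀ a b : ℝ, 0 ≤ a → 0 ≤ b → a + b = 1 →
        g x ^ a * g y ^ b ≤ g (a * x + b * y))
    (G : ℝ → ℝ) (hG : ∀ v, G v = ∫ t in vmin..v, g t)
    (m : ℝ → ℝ) (hm : ∀ v, m v = (∫ t in vmin..v, t * g t) / G v) :
    ∀ v ∈ Set.Ioo vmin vmax, ∃ d : ℝ, HasDerivAt m d v ∧ 0 < d ∧ d < 1 := by
  intro v hv
  have hm_eq : m = truncatedMean g vmin := funext fun w => by rw [hm, hG]; rfl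
  have hGv : 0 < ∫ t in vmin..v, g t :=
    integral_pos_of_continuousOn_of_pos hg_cont hg_pos hv.1 hv.2.le
  refine ⟨_, hm_eq ▸ hasDerivAt_truncatedMean hg_cont hv hGv.ne', ?_, ?_⟩
  · exact div_pos (mul_pos (hg_pos v (Ioo_subset_Icc_self hv))
      (integral_primitive_pos hg_cont hg_pos hv.1 hv.2.le)) (pow_pos hGv 2)
  · rw [div_lt_one (pow_pos hGv 2)]
    exact LogConcaveOn.mul_integral_primitive_lt_sq hg_logconcave hg_cont hg_pos hv.1 hv.2.le

/-- Bagnoli–Bergstrom: with a log-concave density g, the truncated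
mean m(v̄) = (∫_{v_min}^{v̄} t g(t) dt)/G(v̄) is differentiable with slope in (0,1)
on (v_min, v_max). -/
theorem truncated_mean_slope
    (vmin vmax : ℝ) (hv : vmin < vmax)
    (g : ℝ → ℝ)
    (hg_cont : ContinuousOn g (Set.Icc vmin vmax))
    (hg_pos : ∀ x ∈ Set.Icc vmin vmax, 0 < g x)
    (hg_density : ∫ t in vmin..vmax, g t = 1)
    (hg_logconcave : ∀ x ∈ Set.Icc vmin vmax, ∀ y ∈ Set.Icc vmin vmax,
      ∀ a b : ℝ, 0 ≤ a → 0 ≤ b → a + b = 1 →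
        g x ^ a * g y ^ b ≤ g (a * x + b * y))
    (G : ℝ → ℝ) (hG : ∀ v, G v = ∫ t in vmin..v, g t)
    (m : ℝ → ℝ) (hm : ∀ v, m v = (∫ t in vmin..v, t * g t) / G v) :
    ∀ v ∈ Set.Ioo vmin vmax, ∃ d : ℝ, HasDerivAt m d v ∧ 0 < d ∧ d < 1 :=
  truncated_mean_slope_general vmin vmax g hg_cont hg_pos hg_logconcave G hG m hm
end

section
/- The price given veracious signal, viewed as a function of q, P^q(s, v̂) = (q·s·(1-p·1_{s>v̂}) + (1-q)K)/(q(1-p·1_{s>v̂}) + (1-q)D), evaluated at the benchmark threshold v̂ = v^B, is strictly convex in q for every s ≠ v^B, where K = (1-p)μ + p∫_{v_min}^{v^B} t g(t)dt, D = 1-p+pG(v^B), and v^B = K/D. -/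
/-!
Write `A = 1 - p·1_{s > v^B}` and `D = 1 - p + p G(v^B)`. The benchmark identity `K = v^B D` makes
the price `(q s A + (1 - q) K) / (q A + (1 - q) D)` the mean of `s` and `v^B` with weights `q A`
and `(1 - q) D`, a linear-fractional function of `q`. Such a function is strictly convex exactly
when its second derivative `2 (A - D) A D (v^B - s) / (q A + (1 - q) D)³` is positive, and
`(A - D)(v^B - s) > 0` is the sign condition: if `s > v^B` then `A - D = -p G(v^B) < 0`, and if
`s < v^B` then `A - D = p (1 - G(v^B)) > 0`.
-/

open Set intervalIntegral

theorem strictConvexOn_div_affine {S : Set ℝ} {α β γ δ : ℝ} (hS : Convex ℝ S)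
    (hden : ∀ q ∈ S, 0 < γ * q + δ) (hsign : 0 < γ * (β * γ - α * δ)) :
    StrictConvexOn ℝ S fun q => (α * q + β) / (γ * q + δ) := by
  refine ⟨hS, fun x hx y hy hxy a b ha hb hab => ?_⟩
  have hu := hden x hx
  have hv := hden y hy
  have hw := hden _ (hS hx hy ha.le hb.le hab)
  obtain rfl : b = 1 - a := by linarith
  simp only [smul_eq_mul] at hw ⊢
  have hgap : a * ((α * x + β) / (γ * x + δ)) + (1 - a) * ((α * y + β) / (γ * y + δ))
        - (α * (a * x + (1 - a) * y) + β) / (γ * (a * x + (1 - a) * y) + δ)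
      = a * (1 - a) * (x - y) ^ 2 * (γ * (β * γ - α * δ))
        / ((γ * x + δ) * (γ * y + δ) * (γ * (a * x + (1 - a) * y) + δ)) := by
    rw [mul_div_assoc', mul_div_assoc', div_add_div _ _ hu.ne' hv.ne',
      div_sub_div _ _ (mul_ne_zero hu.ne' hv.ne') hw.ne', div_left_inj' (by positivity)]
    ring
  have hsq : 0 < (x - y) ^ 2 := sq_pos_of_ne_zero (sub_ne_zero.2 hxy)
  have : 0 < a * (1 - a) * (x - y) ^ 2 * (γ * (β * γ - α * δ))
      / ((γ * x + δ) * (γ * y + δ) * (γ * (a * x + (1 - a) * y) + δ)) := by positivity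
  linarith

theorem strictConvexOn_weighted_price {s A D K : ℝ} (hA : 0 < A) (hD : 0 < D)
    (hsign : 0 < (A - D) * (K - s * D)) :
    StrictConvexOn ℝ (Icc 0 1) fun q => (q * s * A + (1 - q) * K) / (q * A + (1 - q) * D) := by
  have hden : ∀ q ∈ Icc (0 : ℝ) 1, 0 < (A - D) * q + D := fun q hq => by
    have := convex_Ioi (0 : ℝ) hA hD hq.1 (sub_nonneg.2 hq.2) (add_sub_cancel q 1)
    simp only [smul_eq_mul, mem_Ioi] at this
    linarith
  have hconv := strictConvexOn_div_affine (α := s * A - K) (β := K) (convex_Icc 0 1) hden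
    (by nlinarith [mul_pos hA hsign])
  convert hconv using 2 with q
  ring_nf

theorem integral_density_mem_Ioo {a b v : ℝ} {g : ℝ → ℝ} (hg_cont : ContinuousOn g (Icc a b))
    (hg_pos : ∀ x ∈ Icc a b, 0 < g x) (hg_density : ∫ t in a..b, g t = 1) (hv : v ∈ Ioo a b) :
    ∫ t in a..v, g t ∈ Ioo 0 1 := by
  obtain ⟨hav, hvb⟩ := hv
  have hint_left : IntervalIntegrable g MeasureTheory.volume a v :=
    (hg_cont.mono (Icc_subset_Icc le_rfl hvb.le)).intervalIntegrable_of_Icc hav.le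
  have hint_right : IntervalIntegrable g MeasureTheory.volume v b :=
    (hg_cont.mono (Icc_subset_Icc hav.le le_rfl)).intervalIntegrable_of_Icc hvb.le
  have hpos_left : 0 < ∫ t in a..v, g t :=
    intervalIntegral_pos_of_pos_on hint_left
      (fun x hx => hg_pos x ⟨hx.1.le, hx.2.le.trans hvb.le⟩) hav
  have hpos_right : 0 < ∫ t in v..b, g t :=
    intervalIntegral_pos_of_pos_on hint_right
      (fun x hx => hg_pos x ⟨hav.le.trans hx.1.le, hx.2.le⟩) hvb
  have hsplit := integral_add_adjacent_intervals hint_left hint_right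
  exact ⟨hpos_left, by linarith⟩

theorem benchmark_sign_condition {p G v s : ℝ} (hp : 0 < p) (hG : G ∈ Ioo 0 1) (hs : s ≠ v) :
    0 < (1 - p * (if v < s then 1 else 0) - (1 - p + p * G)) * (v - s) := by
  obtain ⟨hG0, hG1⟩ := hG
  split_ifs with hvs
  · nlinarith [mul_pos hp hG0]
  · nlinarith [mul_pos hp (sub_pos.2 hG1), lt_of_le_of_ne (not_lt.1 hvs) hs]

theorem price_strictly_convex_in_q_at_benchmark_general
    (vmin vmax : ℝ)
    (p : ℝ) (hp : p ∈ Set.Ioo (0:ℝ) 1)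
    (g : ℝ → ℝ)
    (hg_cont : ContinuousOn g (Set.Icc vmin vmax))
    (hg_pos : ∀ x ∈ Set.Icc vmin vmax, 0 < g x)
    (hg_density : ∫ t in vmin..vmax, g t = 1)
    (G : ℝ → ℝ) (hG : ∀ v, G v = ∫ t in vmin..v, g t)
    (vB : ℝ) (hvB_mem : vB ∈ Set.Ioo vmin vmax)
    (K D : ℝ)
    (hD : D = 1 - p + p * G vB)
    (hvB : vB = K / D) :
    ∀ s : ℝ, s ≠ vB →
      StrictConvexOn ℝ (Set.Icc (0:ℝ) 1)
        (fun q : ℝ =>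
          (q * s * (1 - p * (if vB < s then 1 else 0)) + (1 - q) * K) /
          (q * (1 - p * (if vB < s then 1 else 0)) + (1 - q) * D)) := by
  intro s hs
  obtain ⟨hp0, hp1⟩ := hp
  have hGvB : G vB ∈ Ioo 0 1 := hG vB ▸ integral_density_mem_Ioo hg_cont hg_pos hg_density hvB_mem
  have hD_pos : 0 < D := by nlinarith [hGvB.1]
  have hK : K = vB * D := by rw [hvB, div_mul_cancel₀ _ hD_pos.ne']
  have hsign := benchmark_sign_condition hp0 hGvB hs
  rw [← hD] at hsign
  refine strictConvexOn_weighted_price (by split_ifs <;> linarith) hD_pos ?_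
  rw [hK, ← sub_mul, ← mul_assoc]
  exact mul_pos hsign hD_pos

/-- at the benchmark threshold v̂ = v^B, the price
P^q(s, v̂) = (q·s·(1-p·1_{s>v̂}) + (1-q)K)/(q(1-p·1_{s>v̂}) + (1-q)D) is strictly
convex in q on [0,1] for every s ≠ v^B. -/
theorem price_strictly_convex_in_q_at_benchmark
    (vmin vmax : ℝ) (hv : vmin < vmax)
    (p : ℝ) (hp : p ∈ Set.Ioo (0:ℝ) 1)
    (g : ℝ → ℝ)
    (hg_cont : ContinuousOn g (Set.Icc vmin vmax))
    (hg_pos : ∀ x ∈ Set.Icc vmin vmax, 0 < g x)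
    (hg_density : ∫ t in vmin..vmax, g t = 1)
    (G : ℝ → ℝ) (hG : ∀ v, G v = ∫ t in vmin..v, g t)
    (μ : ℝ) (hμ : μ = ∫ t in vmin..vmax, t * g t)
    (vB : ℝ) (hvB_mem : vB ∈ Set.Ioo vmin vmax)
    (K D : ℝ)
    (hK : K = (1 - p) * μ + p * ∫ t in vmin..vB, t * g t)
    (hD : D = 1 - p + p * G vB)
    (hvB : vB = K / D) :
    ∀ s : ℝ, s ≠ vB →
      StrictConvexOn ℝ (Set.Icc (0:ℝ) 1)
        (fun q : ℝ =>
          (q * s * (1 - p * (if vB < s then 1 else 0)) + (1 - q) * K) /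
          (q * (1 - p * (if vB < s then 1 else 0)) + (1 - q) * D)) :=
  price_strictly_convex_in_q_at_benchmark_general vmin vmax p hp g hg_cont hg_pos hg_density G hG vB
    hvB_mem K D hD hvB
end

section
/- The derivative at q = 0 of the expected nondisclosure price against the prior signal distribution vanishes: (d/dq)|_{q=0} ∫ P^q(s, v̂) g(s) ds = 0, because ∫(s(1-p·1_{s>v̂}) - (1-p)μ - p∫_{v_min}^{v̂} t g(t)dt) g(s)ds = 0 and ∫(1-p·1_{s>v̂} - (1-p+pG(v̂))) g(s)ds = 0. -/
/-!
The weight `a(s) = 1 - p·1{s > v̂}` takes only the values `1` and `1 - p`, so on each side of `v̂`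
every integrand in sight is `(x s + y) g(s)` with constant `x, y`, and every integral reduces to
the partial moments `M₀ = ∫_{v_min}^{v̂} s g`, `M₁ = ∫_{v̂}^{v_max} s g`, `P₀ = G(v̂)`,
`P₁ = ∫_{v̂}^{v_max} g`. Then `K = M₀ + (1 - p) M₁` and `D = P₀ + (1 - p) P₁` are the `a`-weighted
first and zeroth moments, which is the content of the first two identities. The expected price is
a sum of two linear fractions in `q`, and the quotient rule gives its derivative at `0` as
`(D (M₀ + (1 - p) M₁) - K (P₀ + (1 - p) P₁)) / D² = (D K - K D) / D² = 0`.
-/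

open intervalIntegral MeasureTheory Set
open scoped Interval

section
variable {a b c : ℝ}

theorem integral_ite_lt_eq_add {f₀ f₁ : ℝ → ℝ} (hab : a ≤ b) (hbc : b ≤ c)
    (h₀ : IntervalIntegrable f₀ volume a b) (h₁ : IntervalIntegrable f₁ volume b c) :
    ∫ s in a..c, (if b < s then f₁ s else f₀ s) = (∫ s in a..b, f₀ s) + ∫ s in b..c, f₁ s := by
  have e₀ : EqOn f₀ (fun s => if b < s then f₁ s else f₀ s) (Ι a b) := by
    rw [uIoc_of_le hab]; exact fun s hs => (if_neg (not_lt.2 hs.2)).symm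
  have e₁ : EqOn f₁ (fun s => if b < s then f₁ s else f₀ s) (Ι b c) := by
    rw [uIoc_of_le hbc]; exact fun s hs => (if_pos hs.1).symm
  rw [← integral_add_adjacent_intervals (h₀.congr e₀) (h₁.congr e₁),
    integral_congr_ae (.of_forall fun s hs => (e₀ hs).symm),
    integral_congr_ae (.of_forall fun s hs => (e₁ hs).symm)]

theorem integral_affine_mul {g : ℝ → ℝ} (hg : ContinuousOn g [[a, b]]) (x y : ℝ) :
    ∫ s in a..b, (x * s + y) * g s = x * (∫ s in a..b, s * g s) + y * ∫ s in a..b, g s := by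
  have hsg : IntervalIntegrable (fun s => s * g s) volume a b :=
    (continuousOn_id.mul hg).intervalIntegrable
  rw [← intervalIntegral.integral_const_mul, ← intervalIntegral.integral_const_mul,
    ← integral_add (hsg.const_mul x) (hg.intervalIntegrable.const_mul y)]
  exact integral_congr fun s _ => by ring

theorem integral_ite_affine_mul {g : ℝ → ℝ} (hab : a ≤ b) (hbc : b ≤ c)
    (hg : ContinuousOn g (Icc a c)) (x₀ y₀ x₁ y₁ : ℝ) {F : ℝ → ℝ}
    (hF : ∀ s, F s = if b < s then (x₁ * s + y₁) * g s else (x₀ * s + y₀) * g s) :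
    ∫ s in a..c, F s =
      x₀ * (∫ s in a..b, s * g s) + y₀ * (∫ s in a..b, g s) +
        (x₁ * (∫ s in b..c, s * g s) + y₁ * ∫ s in b..c, g s) := by
  have hg₀ : ContinuousOn g [[a, b]] := hg.mono (by rw [uIcc_of_le hab]; gcongr)
  have hg₁ : ContinuousOn g [[b, c]] := hg.mono (by rw [uIcc_of_le hbc]; gcongr)
  have hint {d e : ℝ} (h : ContinuousOn g [[d, e]]) (x y : ℝ) :
      IntervalIntegrable (fun s => (x * s + y) * g s) volume d e :=
    ContinuousOn.intervalIntegrable (by fun_prop)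
  rw [funext hF, integral_ite_lt_eq_add hab hbc (hint hg₀ x₀ y₀) (hint hg₁ x₁ y₁),
    integral_affine_mul hg₀, integral_affine_mul hg₁]

theorem integral_ite_linFrac_mul {g : ℝ → ℝ} (hab : a ≤ b) (hbc : b ≤ c)
    (hg : ContinuousOn g (Icc a c)) (p K D q : ℝ) :
    ∫ s in a..c, ((q * s * (1 - p * (if b < s then 1 else 0)) + (1 - q) * K) /
        (q * (1 - p * (if b < s then 1 else 0)) + (1 - q) * D)) * g s =
      (q * (∫ s in a..b, s * g s) + (1 - q) * (K * ∫ s in a..b, g s)) /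
          (q * 1 + (1 - q) * D) +
        (q * ((1 - p) * ∫ s in b..c, s * g s) + (1 - q) * (K * ∫ s in b..c, g s)) /
          (q * (1 - p) + (1 - q) * D) := by
  refine (integral_ite_affine_mul hab hbc hg
    (q / (q * 1 + (1 - q) * D)) ((1 - q) * K / (q * 1 + (1 - q) * D))
    (q * (1 - p) / (q * (1 - p) + (1 - q) * D)) ((1 - q) * K / (q * (1 - p) + (1 - q) * D))
    fun s => ?_).trans (by ring)
  split_ifs <;> ring

end

theorem hasDerivAt_linFrac_zero (u v w : ℝ) {D : ℝ} (hD : D ≠ 0) :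
    HasDerivAt (fun q : ℝ => (q * u + (1 - q) * v) / (q * w + (1 - q) * D))
      ((u * D - v * w) / D ^ 2) 0 := by
  have hline (y z : ℝ) : HasDerivAt (fun q : ℝ => q * y + (1 - q) * z) (y - z) 0 :=
    (((hasDerivAt_id' 0).mul_const y).add (((hasDerivAt_id' 0).const_sub 1).mul_const z)).congr_deriv
      (by ring)
  refine ((hline u v).div (hline w D) (by simpa using hD)).congr_deriv ?_
  simp only [zero_mul, sub_zero, one_mul, zero_add]
  ring

theorem expected_price_derivative_at_zero_general
    (vmin vmax : ℝ)
    (p : ℝ) (hp : p ∈ Set.Ioo (0:ℝ) 1)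
    (g : ℝ → ℝ)
    (hg_cont : ContinuousOn g (Set.Icc vmin vmax))
    (hg_pos : ∀ x ∈ Set.Icc vmin vmax, 0 < g x)
    (hg_density : ∫ t in vmin..vmax, g t = 1)
    (G : ℝ → ℝ) (hG : ∀ v, G v = ∫ t in vmin..v, g t)
    (μ : ℝ) (hμ : μ = ∫ t in vmin..vmax, t * g t)
    (vhat : ℝ) (hvhat : vhat ∈ Set.Ioo vmin vmax)
    (K D : ℝ)
    (hK : K = (1 - p) * μ + p * ∫ t in vmin..vhat, t * g t)
    (hD : D = 1 - p + p * G vhat) :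
    (∫ s in vmin..vmax,
        (s * (1 - p * (if vhat < s then 1 else 0)) - K) * g s) = 0 ∧
    (∫ s in vmin..vmax,
        ((1 - p * (if vhat < s then 1 else 0)) - D) * g s) = 0 ∧
    HasDerivAt
      (fun q : ℝ => ∫ s in vmin..vmax,
        ((q * s * (1 - p * (if vhat < s then 1 else 0)) + (1 - q) * K) /
          (q * (1 - p * (if vhat < s then 1 else 0)) + (1 - q) * D)) * g s)
      0 0 := by
  have hab := hvhat.1.le
  have hbc := hvhat.2.le
  have hsplit := integral_ite_affine_mul hab hbc hg_cont
  set M₀ := ∫ s in vmin..vhat, s * g s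
  set M₁ := ∫ s in vhat..vmax, s * g s
  set P₀ := ∫ s in vmin..vhat, g s
  set P₁ := ∫ s in vhat..vmax, g s
  have hM : μ = M₀ + M₁ := by
    rw [hμ, hsplit 1 0 1 0 (F := fun s => s * g s) fun s => by split_ifs <;> ring]; ring
  have hP : 1 = P₀ + P₁ := by
    rw [← hg_density, hsplit 0 1 0 1 (F := g) fun s => by split_ifs <;> ring]; ring
  have hGP : G vhat = P₀ := hG vhat
  have hK' : K = M₀ + (1 - p) * M₁ := by rw [hK, hM]; ring
  have hD' : D = P₀ + (1 - p) * P₁ := by rw [hD, hGP]; linear_combination (1 - p) * hP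
  have hD_pos : 0 < D := by
    have hP₀ : 0 ≤ P₀ := integral_nonneg hab fun x hx => (hg_pos x ⟨hx.1, hx.2.trans hbc⟩).le
    rw [hD, hGP]
    linarith [hp.2, mul_nonneg hp.1.le hP₀]
  refine ⟨?_, ?_, ?_⟩
  · refine (hsplit 1 (-K) (1 - p) (-K) fun s => ?_).trans ?_
    · split_ifs <;> ring
    · linear_combination -hK' + K * hP
  · refine (hsplit 0 (1 - D) 0 (1 - p - D) fun s => ?_).trans ?_
    · split_ifs <;> ring
    · linear_combination -hD' + D * hP
  · have hD₀ : D ≠ 0 := hD_pos.ne'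
    refine HasDerivAt.congr_of_eventuallyEq (((hasDerivAt_linFrac_zero M₀ (K * P₀) 1 hD₀).add
      (hasDerivAt_linFrac_zero ((1 - p) * M₁) (K * P₁) (1 - p) hD₀)).congr_deriv ?_)
      (.of_forall fun q => integral_ite_linFrac_mul hab hbc hg_cont p K D q)
    rw [← add_div, div_eq_zero_iff]
    exact .inl (by linear_combination K * hD' - D * hK')

/-- the derivative at q = 0 of the expected nondisclosure price
∫ P^q(s, v̂) g(s) ds vanishes, because the two auxiliary integrals vanish. -/
theorem expected_price_derivative_at_zero
    (vmin vmax : ℝ) (hv : vmin < vmax)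
    (p : ℝ) (hp : p ∈ Set.Ioo (0:ℝ) 1)
    (g : ℝ → ℝ)
    (hg_cont : ContinuousOn g (Set.Icc vmin vmax))
    (hg_pos : ∀ x ∈ Set.Icc vmin vmax, 0 < g x)
    (hg_density : ∫ t in vmin..vmax, g t = 1)
    (G : ℝ → ℝ) (hG : ∀ v, G v = ∫ t in vmin..v, g t)
    (μ : ℝ) (hμ : μ = ∫ t in vmin..vmax, t * g t)
    (vhat : ℝ) (hvhat : vhat ∈ Set.Ioo vmin vmax)
    (K D : ℝ)
    (hK : K = (1 - p) * μ + p * ∫ t in vmin..vhat, t * g t)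
    (hD : D = 1 - p + p * G vhat) :
    (∫ s in vmin..vmax,
        (s * (1 - p * (if vhat < s then 1 else 0)) - K) * g s) = 0 ∧
    (∫ s in vmin..vmax,
        ((1 - p * (if vhat < s then 1 else 0)) - D) * g s) = 0 ∧
    HasDerivAt
      (fun q : ℝ => ∫ s in vmin..vmax,
        ((q * s * (1 - p * (if vhat < s then 1 else 0)) + (1 - q) * K) /
          (q * (1 - p * (if vhat < s then 1 else 0)) + (1 - q) * D)) * g s)
      0 0 :=
  expected_price_derivative_at_zero_general vmin vmax p hp g hg_cont hg_pos hg_density G hG μ hμ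
    vhat hvhat K D hK hD
end

section
/- In the late-disclosure equilibrium with threshold v^L(s) defined implicitly by v^L(s) = (q·a·s + (1-q)((1-p)μ + p∫_{v_min}^{v^L(s)} t g(t)dt))/(q·a + (1-q)(1-p+pG(v^L(s)))) where a = 1 if s < v^B and a = 1-p if s > v^B: if s < v^B then v^L(s) > s and v^L(s) < v^B; if s > v^B then v^L(s) < s and v^L(s) > v^B. -/
open intervalIntegral

lemma phi_strict_anti
    (vmin vmax p : ℝ) (hp0 : 0 < p) (hp1 : p < 1)
    (g : ℝ → ℝ) (hg_cont : ContinuousOn g (Set.Icc vmin vmax))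
    (hg_pos : ∀ x ∈ Set.Icc vmin vmax, 0 < g x)
    (G : ℝ → ℝ) (hG : ∀ v, G v = ∫ t in vmin..v, g t) (μ : ℝ)
    (u w : ℝ) (hu : u ∈ Set.Icc vmin vmax) (hw : w ∈ Set.Icc vmin vmax) (huw : u < w) :
    (1-p)*μ + p*(∫ t in vmin..w, t*g t) - w*(1-p+p*G w)
      < (1-p)*μ + p*(∫ t in vmin..u, t*g t) - u*(1-p+p*G u) := by
  have hsub_uw : Set.uIcc u w ⊆ Set.Icc vmin vmax := Set.uIcc_subset_Icc hu hw
  have hmin : vmin ∈ Set.Icc vmin vmax := ⟨le_refl _, le_of_lt (lt_of_le_of_lt hu.1 (lt_of_lt_of_le huw hw.2))⟩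
  have hsub_mu : Set.uIcc vmin u ⊆ Set.Icc vmin vmax := Set.uIcc_subset_Icc hmin hu
  have hgI_uw : IntervalIntegrable g MeasureTheory.volume u w :=
    (hg_cont.mono hsub_uw).intervalIntegrable
  have hgI_mu : IntervalIntegrable g MeasureTheory.volume vmin u :=
    (hg_cont.mono hsub_mu).intervalIntegrable
  have htg_cont : ContinuousOn (fun t => t * g t) (Set.Icc vmin vmax) :=
    continuousOn_id.mul hg_cont
  have htgI_uw : IntervalIntegrable (fun t => t * g t) MeasureTheory.volume u w :=
    (htg_cont.mono hsub_uw).intervalIntegrable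
  have htgI_mu : IntervalIntegrable (fun t => t * g t) MeasureTheory.volume vmin u :=
    (htg_cont.mono hsub_mu).intervalIntegrable
  have hsplit_t : (∫ t in vmin..w, t*g t) = (∫ t in vmin..u, t*g t) + ∫ t in u..w, t*g t :=
    (integral_add_adjacent_intervals htgI_mu htgI_uw).symm
  have hsplit_g : G w = G u + ∫ t in u..w, g t := by
    rw [hG, hG]
    exact (integral_add_adjacent_intervals hgI_mu hgI_uw).symm
  have hGu : 0 ≤ G u := by
    rw [hG]
    apply intervalIntegral.integral_nonneg hu.1
    intro x hx
    exact le_of_lt (hg_pos x ⟨hx.1, hx.2.trans hu.2⟩)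
  have hkey : 0 < ∫ t in u..w, (w - t) * g t := by
    apply intervalIntegral.intervalIntegral_pos_of_pos_on
    · exact (((continuous_const.sub continuous_id).continuousOn).mul (hg_cont.mono hsub_uw)).intervalIntegrable
    · intro x hx
      have hxI : x ∈ Set.Icc vmin vmax := hsub_uw ⟨le_of_lt (min_lt_iff.mpr (Or.inl hx.1)) |>.trans (le_of_eq rfl), by
        exact le_max_iff.mpr (Or.inr (le_of_lt hx.2))⟩
      exact mul_pos (by linarith [hx.2]) (hg_pos x hxI)
    · exact huw
  have hwu : (∫ t in u..w, (w - t) * g t)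
      = w * (∫ t in u..w, g t) - ∫ t in u..w, t * g t := by
    have : ∀ t, (w - t) * g t = w * g t - t * g t := by intro t; ring
    simp only [this]
    rw [intervalIntegral.integral_sub (hgI_uw.const_mul w) htgI_uw,
      intervalIntegral.integral_const_mul]
  have h1 : 0 < (w - u) * (1 - p) := mul_pos (by linarith) (by linarith)
  have h2 : 0 ≤ p * ((w - u) * G u) :=
    mul_nonneg (le_of_lt hp0) (mul_nonneg (by linarith) hGu)
  have h3 : 0 < p * (w * (∫ t in u..w, g t) - ∫ t in u..w, t * g t) := by
    rw [← hwu]; exact mul_pos hp0 hkey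
  rw [hsplit_t, hsplit_g]
  nlinarith [h1, h2, h3]
/-- the late-disclosure threshold v^L(s), defined by the fixed-point
condition with weight a = 1 for s < v^B and a = 1-p for s > v^B, satisfies
s < v^L(s) < v^B when s < v^B and v^B < v^L(s) < s when s > v^B. -/
theorem late_threshold_position
    (vmin vmax : ℝ) (hv : vmin < vmax)
    (p q : ℝ) (hp : p ∈ Set.Ioo (0:ℝ) 1) (hq : q ∈ Set.Ioo (0:ℝ) 1)
    (g : ℝ → ℝ)
    (hg_cont : ContinuousOn g (Set.Icc vmin vmax))
    (hg_pos : ∀ x ∈ Set.Icc vmin vmax, 0 < g x)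
    (hg_density : ∫ t in vmin..vmax, g t = 1)
    (hg_logconcave : ∀ x ∈ Set.Icc vmin vmax, ∀ y ∈ Set.Icc vmin vmax,
      ∀ a b : ℝ, 0 ≤ a → 0 ≤ b → a + b = 1 →
        g x ^ a * g y ^ b ≤ g (a * x + b * y))
    (G : ℝ → ℝ) (hG : ∀ v, G v = ∫ t in vmin..v, g t)
    (μ : ℝ) (hμ : μ = ∫ t in vmin..vmax, t * g t)
    (vB : ℝ) (hvB_mem : vB ∈ Set.Ioo vmin vmax)
    (hvB : vB * ((1 - p) + p * G vB) = (1 - p) * μ + p * ∫ t in vmin..vB, t * g t)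
    (s vL : ℝ) (hs : s ∈ Set.Icc vmin vmax) (hvL_mem : vL ∈ Set.Icc vmin vmax)
    (hvL : vL =
      (q * (if s < vB then 1 else 1 - p) * s +
        (1 - q) * ((1 - p) * μ + p * ∫ t in vmin..vL, t * g t)) /
      (q * (if s < vB then 1 else 1 - p) + (1 - q) * (1 - p + p * G vL))) :
    (s < vB → s < vL ∧ vL < vB) ∧ (vB < s → vL < s ∧ vB < vL) := by
  obtain ⟨hp0, hp1⟩ := hp
  obtain ⟨hq0, hq1⟩ := hq
  have hvBI : vB ∈ Set.Icc vmin vmax := ⟨le_of_lt hvB_mem.1, le_of_lt hvB_mem.2⟩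
  have hGvL : 0 ≤ G vL := by
    rw [hG]
    apply intervalIntegral.integral_nonneg hvL_mem.1
    intro x hx
    exact le_of_lt (hg_pos x ⟨hx.1, hx.2.trans hvL_mem.2⟩)
  have phiB : (1-p)*μ + p*(∫ t in vmin..vB, t*g t) - vB*(1-p+p*G vB) = 0 := by
    nlinarith [hvB]
  set a : ℝ := if s < vB then 1 else 1 - p with ha_def
  have ha : 0 < a := by
    rw [ha_def]; split <;> linarith
  have hqa : 0 < q * a := mul_pos hq0 ha
  have hd : 0 < q * a + (1-q) * (1 - p + p * G vL) := by
    have : 0 < 1 - p + p * G vL := by nlinarith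
    nlinarith
  rw [eq_div_iff hd.ne'] at hvL
  have hid : q * a * (vL - s)
      = (1-q) * ((1-p)*μ + p*(∫ t in vmin..vL, t*g t) - vL*(1-p+p*G vL)) := by
    linear_combination hvL
  have phiA := phi_strict_anti vmin vmax p hp0 hp1 g hg_cont hg_pos G hG μ
  constructor
  · intro hsB
    have hvLltB : vL < vB := by
      by_contra h
      push_neg at h
      rcases eq_or_lt_of_le h with heq | hlt
      · have h0 : q * a * (vL - s) = 0 := by
          rw [hid, ← heq] at *
          rw [← heq] at phiB
          rw [phiB, mul_zero]
        have : vL = s := by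
          have := mul_eq_zero.mp h0
          rcases this with h' | h'
          · exact absurd h' hqa.ne'
          · linarith
        linarith
      · have hφ := phiA vB vL hvBI hvL_mem hlt
        have hφ0 : (1-p)*μ + p*(∫ t in vmin..vL, t*g t) - vL*(1-p+p*G vL) < 0 := by
          linarith [phiB]
        have hneg : q * a * (vL - s) < 0 := by
          rw [hid]; exact mul_neg_of_pos_of_neg (by linarith) hφ0
        nlinarith
    have hφ := phiA vL vB hvL_mem hvBI hvLltB
    have hφ0 : 0 < (1-p)*μ + p*(∫ t in vmin..vL, t*g t) - vL*(1-p+p*G vL) := by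
      linarith [phiB]
    have hpos : 0 < q * a * (vL - s) := by
      rw [hid]; exact mul_pos (by linarith) hφ0
    refine ⟨?_, hvLltB⟩
    by_contra h
    push_neg at h
    nlinarith
  · intro hBs
    have hvBltL : vB < vL := by
      by_contra h
      push_neg at h
      rcases eq_or_lt_of_le h with heq | hlt
      · have h0 : q * a * (vL - s) = 0 := by
          rw [hid, heq] at *
          rw [heq] at phiB
          rw [phiB, mul_zero]
        have : vL = s := by
          have := mul_eq_zero.mp h0
          rcases this with h' | h'
          · exact absurd h' hqa.ne'
          · linarith
        linarith
      · have hφ := phiA vL vB hvL_mem hvBI hlt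
        have hφ0 : 0 < (1-p)*μ + p*(∫ t in vmin..vL, t*g t) - vL*(1-p+p*G vL) := by
          linarith [phiB]
        have hpos : 0 < q * a * (vL - s) := by
          rw [hid]; exact mul_pos (by linarith) hφ0
        nlinarith
    have hφ := phiA vB vL hvBI hvL_mem hvBltL
    have hφ0 : (1-p)*μ + p*(∫ t in vmin..vL, t*g t) - vL*(1-p+p*G vL) < 0 := by
      linarith [phiB]
    have hneg : q * a * (vL - s) < 0 := by
      rw [hid]; exact mul_neg_of_pos_of_neg (by linarith) hφ0
    refine ⟨?_, hvBltL⟩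
    by_contra h
    push_neg at h
    nlinarith
end

section
/- The late-disclosure threshold v^L(s) is increasing in q when s > v^B and decreasing in q when s < v^B. Specifically, writing v^L(s) = λ(q)·s + (1-λ(q))·E[v | N, ∅] as a convex combination with λ(q) = Pr(V | s, ∅) increasing in q: if s > E[v|N,∅] then v^L(s) increases in q; if s < E[v|N,∅] it decreases; and s ≷ v^B implies s ≷ E[v|N,∅]. -/
/-!
Clearing denominators in `v^L = λ s + (1 - λ) E[v | N, ∅]` gives
`(1 - q) φ(v^L) = q a (s - v^L)`, where `φ(v) = Pr(∅ | N) (v - E[v | N, ∅])`. Since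
`φ' = Pr(∅ | N) > 0` and `φ(v^B) = 0`, the threshold lies strictly between `v^B` and `s`, with
`E[v | N, ∅]` beyond it on the far side from `s`, and it moves towards `s` as `q a / (1 - q)` grows.

Solving the convex combination, `λ = w / (|s - v^L| + w)` with `w = |v^L - E[v | N, ∅]|`. As `q`
grows, `|s - v^L|` strictly shrinks while `w` does not, because `v ↦ v - E[v | N, ∅]` is
nondecreasing: its derivative is `1 - p g φ / Pr(∅ | N)^2 ≥ 0`, by the log-concavity inequality
`g(v) ∫_{vmin}^v G ≤ G(v)^2`, which integrates `g(v) G(t) ≤ g(t) G(v)` for `t ≤ v`.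
If `s = v^B` the threshold is constant and `λ` increases by its explicit formula.
-/

open Set intervalIntegral
open MeasureTheory (volume ae_restrict_of_forall_mem)

theorem hasDerivAt_integral_of_continuousOn_s15 {f : ℝ → ℝ} {a b x : ℝ}
    (hf : ContinuousOn f (Icc a b)) (hx : x ∈ Ioo a b) :
    HasDerivAt (fun u => ∫ t in a..u, f t) (f x) x :=
  integral_hasDerivAt_right
    ((hf.mono (Icc_subset_Icc_right hx.2.le)).intervalIntegrable_of_Icc hx.1.le)
    ((hf.mono Ioo_subset_Icc_self).stronglyMeasurableAtFilter isOpen_Ioo x hx)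
    (hf.continuousAt (Icc_mem_nhds hx.1 hx.2))

theorem ContinuousOn.intervalIntegrable_of_mem_Icc {f : ℝ → ℝ} {a b x y : ℝ}
    (hf : ContinuousOn f (Icc a b)) (hx : x ∈ Icc a b) (hy : y ∈ Icc a b) :
    IntervalIntegrable f volume x y :=
  (hf.mono (uIcc_subset_Icc hx hy)).intervalIntegrable

theorem continuousOn_primitive_Icc {g : ℝ → ℝ} {a b : ℝ} (hg : ContinuousOn g (Icc a b)) :
    ContinuousOn (fun x => ∫ t in a..x, g t) (Icc a b) := by
  rcases le_or_gt a b with hab | hab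
  · rw [← uIcc_of_le hab] at hg ⊢
    exact continuousOn_primitive_interval (hg.integrableOn_compact isCompact_uIcc)
  · simp [Icc_eq_empty_of_lt hab]

theorem mul_integral_le_integral_mul {g : ℝ → ℝ} {a b : ℝ} (hab : a ≤ b)
    (hg : ContinuousOn g (Icc a b)) (hg0 : ∀ x ∈ Icc a b, 0 ≤ g x) :
    a * ∫ t in a..b, g t ≤ ∫ t in a..b, t * g t := by
  rw [← integral_const_mul]
  exact integral_mono_on hab ((hg.intervalIntegrable_of_Icc hab).const_mul a)
    ((continuousOn_id.mul hg).intervalIntegrable_of_Icc hab)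
    fun t ht => mul_le_mul_of_nonneg_right ht.1 (hg0 t ht)

theorem integral_integral_eq_mul_sub {g : ℝ → ℝ} {a v : ℝ} (hav : a ≤ v)
    (hg : ContinuousOn g (Icc a v)) :
    ∫ t in a..v, (∫ u in a..t, g u) = v * (∫ t in a..v, g t) - ∫ t in a..v, t * g t := by
  have hparts := integral_mul_deriv_eq_deriv_mul_of_hasDerivAt (a := a) (b := v)
    (u := fun t => ∫ u in a..t, g u) (v := id) (u' := g) (v' := fun _ => 1)
    (by rw [uIcc_of_le hav]; exact continuousOn_primitive_Icc hg)
    continuousOn_id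
    (fun x hx => by
      rw [min_eq_left hav, max_eq_right hav] at hx
      exact hasDerivAt_integral_of_continuousOn_s15 hg hx)
    (fun x _ => hasDerivAt_id x)
    (hg.intervalIntegrable_of_Icc hav) intervalIntegrable_const
  simp only [mul_one, id, integral_same, zero_mul, sub_zero] at hparts
  rw [hparts, mul_comm]
  simp_rw [mul_comm (g _)]

def IsLogConcaveOn (g : ℝ → ℝ) (S : Set ℝ) : Prop :=
  ∀ x ∈ S, ∀ y ∈ S, ∀ a b : ℝ, 0 ≤ a → 0 ≤ b → a + b = 1 → g x ^ a * g y ^ b ≤ g (a * x + b * y)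

namespace IsLogConcaveOn

variable {g : ℝ → ℝ}

theorem mul_le_mul_inner {S : Set ℝ} (hg : IsLogConcaveOn g S) (hg0 : ∀ x ∈ S, 0 ≤ g x)
    {u t v : ℝ} (hu : u ∈ S) (hv : v ∈ S) (hut : u ≤ t) (htv : t < v) :
    g u * g v ≤ g t * g (u + v - t) := by
  have huv : 0 < v - u := by linarith
  set a := (v - t) / (v - u)
  set b := (t - u) / (v - u)
  have hab : a + b = 1 := by simp only [a, b]; field_simp; ring
  have ha : 0 ≤ a := div_nonneg (by linarith) huv.le
  have hb : 0 ≤ b := div_nonneg (by linarith) huv.le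
  have h₁ := hg u hu v hv a b ha hb hab
  have h₂ := hg u hu v hv b a hb ha (by rw [add_comm, hab])
  rw [show a * u + b * v = t by simp only [a, b]; field_simp; ring] at h₁
  rw [show b * u + a * v = u + v - t by simp only [a, b]; field_simp; ring] at h₂
  have hsplit : ∀ x ∈ S, g x ^ a * g x ^ b = g x := fun x hx => by
    rw [← Real.rpow_add' (hg0 x hx) (by rw [hab]; norm_num), hab, Real.rpow_one]
  calc g u * g v = (g u ^ a * g v ^ b) * (g u ^ b * g v ^ a) := by
        linear_combination -(g v ^ a * g v ^ b) * hsplit u hu - g u * hsplit v hv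
    _ ≤ g t * g (u + v - t) := by
        have hnn : ∀ c d : ℝ, 0 ≤ g u ^ c * g v ^ d := fun c d =>
          mul_nonneg (Real.rpow_nonneg (hg0 u hu) _) (Real.rpow_nonneg (hg0 v hv) _)
        exact mul_le_mul h₁ h₂ (hnn b a) ((hnn a b).trans h₁)

theorem integral_mul_le_mul_integral {a b t v : ℝ} (hg : IsLogConcaveOn g (Icc a b))
    (hcont : ContinuousOn g (Icc a b)) (hg0 : ∀ x ∈ Icc a b, 0 ≤ g x)
    (hat : a ≤ t) (htv : t ≤ v) (hvb : v ≤ b) :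
    (∫ u in a..t, g u) * g v ≤ g t * ∫ u in a..v, g u := by
  rcases htv.eq_or_lt with rfl | htv
  · rw [mul_comm]
  have ha : a ∈ Icc a b := ⟨le_rfl, by linarith⟩
  have ht : t ∈ Icc a b := ⟨hat, by linarith⟩
  have hv : v ∈ Icc a b := ⟨by linarith, hvb⟩
  calc (∫ u in a..t, g u) * g v = ∫ u in a..t, g u * g v := (integral_mul_const _ _).symm
    _ ≤ ∫ u in a..t, g t * g (u + (v - t)) := by
        refine integral_mono_on hat ((hcont.intervalIntegrable_of_mem_Icc ha ht).mul_const _) ?_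
          fun u hu => ?_
        · refine ((hcont.comp (continuous_add_const (v - t)).continuousOn fun x hx => ?_).mono
            (uIcc_subset_Icc ⟨le_rfl, hat⟩ ⟨hat, le_rfl⟩)).intervalIntegrable.const_mul _
          exact ⟨by linarith [hx.1], by linarith [hx.2]⟩
        · rw [← add_sub_assoc]
          exact hg.mul_le_mul_inner hg0 ⟨hu.1, by linarith [hu.2]⟩ hv hu.2 htv
    _ = g t * ∫ u in a + (v - t)..v, g u := by
        rw [integral_const_mul, integral_comp_add_right, add_sub_cancel]
    _ ≤ g t * ∫ u in a..v, g u := by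
        refine mul_le_mul_of_nonneg_left (integral_mono_interval (by linarith) (by linarith) le_rfl
          (ae_restrict_of_forall_mem measurableSet_Ioc fun x hx =>
            hg0 x ⟨hx.1.le, by linarith [hx.2]⟩)
          (hcont.intervalIntegrable_of_mem_Icc ha hv)) (hg0 t ht)

theorem mul_sub_integral_le_sq {a b v : ℝ} (hg : IsLogConcaveOn g (Icc a b))
    (hcont : ContinuousOn g (Icc a b)) (hg0 : ∀ x ∈ Icc a b, 0 ≤ g x)
    (hav : a ≤ v) (hvb : v ≤ b) :
    g v * (v * (∫ t in a..v, g t) - ∫ t in a..v, t * g t) ≤ (∫ t in a..v, g t) ^ 2 := by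
  have hcont' := hcont.mono (Icc_subset_Icc_right hvb)
  rw [← integral_integral_eq_mul_sub hav hcont', ← integral_const_mul, sq, ← integral_mul_const]
  refine integral_mono_on hav ?_ ((hcont'.intervalIntegrable_of_Icc hav).mul_const _) fun t ht => ?_
  · exact ((continuousOn_primitive_Icc hcont').intervalIntegrable_of_Icc hav).const_mul _
  · rw [mul_comm]
    exact hg.integral_mul_le_mul_integral hcont hg0 ht.1 ht.2 hvb

end IsLogConcaveOn

theorem strictMonoOn_posterior {a d : ℝ} (ha : 0 < a) (hd : 0 < d) :
    StrictMonoOn (fun q => q * a / (q * a + (1 - q) * d)) (Ioo 0 1) := by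
  intro q₁ hq₁ q₂ hq₂ hq
  have hpos : ∀ q ∈ Ioo (0:ℝ) 1, 0 < q * a + (1 - q) * d := fun q hq =>
    add_pos (mul_pos hq.1 ha) (mul_pos (sub_pos.2 hq.2) hd)
  rw [div_lt_div_iff₀ (hpos q₁ hq₁) (hpos q₂ hq₂)]
  nlinarith [mul_pos (mul_pos ha hd) (sub_pos.2 hq)]

theorem one_sub_mul_sub_eq_of_eq_convex_comb {q a D N s v : ℝ} (hD : D ≠ 0)
    (hden : q * a + (1 - q) * D ≠ 0)
    (h : v = q * a / (q * a + (1 - q) * D) * s + (1 - q * a / (q * a + (1 - q) * D)) * (N / D)) :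
    (1 - q) * (v * D - N) = q * a * (s - v) := by
  field_simp at h
  refine mul_left_cancel₀ hD ?_
  linear_combination h

theorem strictMonoOn_weight_of_strictMonoOn {T U : Set ℝ} {s : ℝ} {v l m : ℝ → ℝ}
    (hcomb : ∀ q ∈ T, v q = l q * s + (1 - l q) * m (v q)) (hv : StrictMonoOn v T)
    (hvU : MapsTo v T U) (hvs : ∀ q ∈ T, v q < s) (hmv : ∀ q ∈ T, m (v q) < v q)
    (hm : MonotoneOn (fun x => x - m x) U) : StrictMonoOn l T := by
  have hl : ∀ q ∈ T, l q = (v q - m (v q)) / (s - m (v q)) := fun q hq => by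
    rw [eq_div_iff (by linarith [hvs q hq, hmv q hq])]
    linear_combination -hcomb q hq
  intro q₁ hq₁ q₂ hq₂ hq
  have hv₁₂ := hv hq₁ hq₂ hq
  have hgap := hm (hvU hq₁) (hvU hq₂) hv₁₂.le
  have := hmv q₁ hq₁
  have := hvs q₂ hq₂
  rw [hl q₁ hq₁, hl q₂ hq₂, div_lt_div_iff₀ (by linarith) (by linarith)]
  nlinarith [mul_lt_mul_of_pos_left (sub_lt_sub_left hv₁₂ s) (sub_pos.2 (hmv q₁ hq₁)),
    mul_le_mul_of_nonneg_right hgap (sub_nonneg.2 (hv₁₂.trans (hvs q₂ hq₂)).le)]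

theorem strictMonoOn_weight_of_strictAntiOn {T U : Set ℝ} {s : ℝ} {v l m : ℝ → ℝ}
    (hcomb : ∀ q ∈ T, v q = l q * s + (1 - l q) * m (v q)) (hv : StrictAntiOn v T)
    (hvU : MapsTo v T U) (hvs : ∀ q ∈ T, s < v q) (hmv : ∀ q ∈ T, v q < m (v q))
    (hm : MonotoneOn (fun x => x - m x) U) : StrictMonoOn l T :=
  strictMonoOn_weight_of_strictMonoOn (U := Neg.neg '' U) (s := -s) (v := fun q => -v q)
    (m := fun x => -m (-x))
    (fun q hq => by simp only [neg_neg]; linear_combination -hcomb q hq)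
    hv.neg (fun q hq => mem_image_of_mem _ (hvU hq)) (fun q hq => neg_lt_neg (hvs q hq))
    (fun q hq => by simpa using hmv q hq)
    (by
      rintro _ ⟨x, hx, rfl⟩ _ ⟨y, hy, rfl⟩ hxy
      have := hm hy hx (neg_le_neg_iff.1 hxy)
      simp only [neg_neg] at this ⊢
      linarith)

theorem mul_lt_mul_of_root {q₁ q₂ a x₁ x₂ y₁ y₂ : ℝ} (hq : q₁ < q₂) (hq₂ : q₂ < 1)
    (ha : 0 < a) (hy : 0 < y₁ * y₂)
    (h₁ : (1 - q₁) * x₁ = q₁ * a * y₁) (h₂ : (1 - q₂) * x₂ = q₂ * a * y₂) :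
    x₁ * y₂ < x₂ * y₁ := by
  refine lt_of_mul_lt_mul_left ?_ (mul_pos (sub_pos.2 (hq.trans hq₂)) (sub_pos.2 hq₂)).le
  calc (1 - q₁) * (1 - q₂) * (x₁ * y₂) = q₁ * (1 - q₂) * (a * (y₁ * y₂)) := by
        linear_combination (1 - q₂) * y₂ * h₁
    _ < q₂ * (1 - q₁) * (a * (y₁ * y₂)) := mul_lt_mul_of_pos_right (by nlinarith) (mul_pos ha hy)
    _ = (1 - q₁) * (1 - q₂) * (x₂ * y₁) := by linear_combination -(1 - q₁) * y₁ * h₂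

structure IsRootFamily (S : Set ℝ) (φ vL : ℝ → ℝ) (a vB s : ℝ) : Prop where
  strictMonoOn : StrictMonoOn φ S
  apply_eq_zero : φ vB = 0
  vB_mem : vB ∈ S
  s_mem : s ∈ S
  mapsTo : MapsTo vL (Ioo 0 1) S
  pos : 0 < a
  root : ∀ q ∈ Ioo (0:ℝ) 1, (1 - q) * φ (vL q) = q * a * (s - vL q)

namespace IsRootFamily

variable {S : Set ℝ} {φ vL : ℝ → ℝ} {a vB s : ℝ}

theorem mapsTo_Ioo_of_lt (h : IsRootFamily S φ vL a vB s) (hs : vB < s) :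
    MapsTo vL (Ioo 0 1) (Ioo vB s) := fun q hq => by
  have hroot := h.root q hq
  have hq' : 0 < q * a := mul_pos hq.1 h.pos
  have hq'' : 0 < 1 - q := sub_pos.2 hq.2
  refine ⟨lt_of_not_ge fun hle => ?_, lt_of_not_ge fun hle => ?_⟩
  · have := h.strictMonoOn.monotoneOn (h.mapsTo hq) h.vB_mem hle
    nlinarith [h.apply_eq_zero]
  · have := h.strictMonoOn h.vB_mem h.s_mem hs
    have := h.strictMonoOn.monotoneOn h.s_mem (h.mapsTo hq) hle
    nlinarith [h.apply_eq_zero]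

theorem mapsTo_Ioo_of_gt (h : IsRootFamily S φ vL a vB s) (hs : s < vB) :
    MapsTo vL (Ioo 0 1) (Ioo s vB) := fun q hq => by
  have hroot := h.root q hq
  have hq' : 0 < q * a := mul_pos hq.1 h.pos
  have hq'' : 0 < 1 - q := sub_pos.2 hq.2
  refine ⟨lt_of_not_ge fun hle => ?_, lt_of_not_ge fun hle => ?_⟩
  · have := h.strictMonoOn h.s_mem h.vB_mem hs
    have := h.strictMonoOn.monotoneOn (h.mapsTo hq) h.s_mem hle
    nlinarith [h.apply_eq_zero]
  · have := h.strictMonoOn.monotoneOn h.vB_mem (h.mapsTo hq) hle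
    nlinarith [h.apply_eq_zero]

theorem eq_of_eq (h : IsRootFamily S φ vL a vB vB) {q : ℝ} (hq : q ∈ Ioo 0 1) : vL q = vB := by
  have hroot := h.root q hq
  have hq' : 0 < q * a := mul_pos hq.1 h.pos
  have hq'' : 0 < 1 - q := sub_pos.2 hq.2
  rcases lt_trichotomy (vL q) vB with hlt | heq | hgt
  · have := h.strictMonoOn (h.mapsTo hq) h.vB_mem hlt
    nlinarith [h.apply_eq_zero]
  · exact heq
  · have := h.strictMonoOn h.vB_mem (h.mapsTo hq) hgt
    nlinarith [h.apply_eq_zero]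

theorem strictMonoOn_of_lt (h : IsRootFamily S φ vL a vB s) (hs : vB < s) :
    StrictMonoOn vL (Ioo 0 1) := fun q₁ hq₁ q₂ hq₂ hq => lt_of_not_ge fun hle => by
  obtain ⟨hB₁, hs₁⟩ := h.mapsTo_Ioo_of_lt hs hq₁
  obtain ⟨hB₂, hs₂⟩ := h.mapsTo_Ioo_of_lt hs hq₂
  have hφ₂ := h.strictMonoOn h.vB_mem (h.mapsTo hq₂) hB₂
  have hφ := h.strictMonoOn.monotoneOn (h.mapsTo hq₂) (h.mapsTo hq₁) hle
  have := mul_lt_mul_of_root hq hq₂.2 h.pos (mul_pos (sub_pos.2 hs₁) (sub_pos.2 hs₂))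
    (h.root q₁ hq₁) (h.root q₂ hq₂)
  rw [h.apply_eq_zero] at hφ₂
  nlinarith [mul_le_mul_of_nonneg_right hφ (sub_pos.2 hs₁).le]

theorem strictAntiOn_of_gt (h : IsRootFamily S φ vL a vB s) (hs : s < vB) :
    StrictAntiOn vL (Ioo 0 1) := fun q₁ hq₁ q₂ hq₂ hq => lt_of_not_ge fun hle => by
  obtain ⟨hs₁, hB₁⟩ := h.mapsTo_Ioo_of_gt hs hq₁
  obtain ⟨hs₂, hB₂⟩ := h.mapsTo_Ioo_of_gt hs hq₂
  have hφ₂ := h.strictMonoOn (h.mapsTo hq₂) h.vB_mem hB₂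
  have hφ := h.strictMonoOn.monotoneOn (h.mapsTo hq₁) (h.mapsTo hq₂) hle
  have := mul_lt_mul_of_root hq hq₂.2 h.pos
    (mul_pos_of_neg_of_neg (sub_neg.2 hs₁) (sub_neg.2 hs₂)) (h.root q₁ hq₁) (h.root q₂ hq₂)
  rw [h.apply_eq_zero] at hφ₂
  nlinarith [mul_le_mul_of_nonneg_right hφ (sub_pos.2 hs₁).le]

end IsRootFamily

namespace LateDisclosure

noncomputable section

variable (vmin p μ : ℝ) (g : ℝ → ℝ)

/- `ndProb v` and `ndMean v` are `Pr(∅ | N)` and `E[v | N, ∅]` when the informed sender conceals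
exactly the values below `v`; `ndExcess v` is the `φ(v)` of the proof sketch. -/

def ndProb (v : ℝ) : ℝ := 1 - p + p * ∫ t in vmin..v, g t

def ndMoment (v : ℝ) : ℝ := (1 - p) * μ + p * ∫ t in vmin..v, t * g t

def ndMean (v : ℝ) : ℝ := ndMoment vmin p μ g v / ndProb vmin p g v

def ndExcess (v : ℝ) : ℝ := v * ndProb vmin p g v - ndMoment vmin p μ g v

end

variable {vmin vmax p μ v : ℝ} {g : ℝ → ℝ}

theorem hasDerivAt_ndProb (hg : ContinuousOn g (Icc vmin vmax)) {x : ℝ}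
    (hx : x ∈ Ioo vmin vmax) : HasDerivAt (ndProb vmin p g) (p * g x) x :=
  ((hasDerivAt_integral_of_continuousOn_s15 hg hx).const_mul p).const_add (1 - p)

theorem hasDerivAt_ndMoment (hg : ContinuousOn g (Icc vmin vmax)) {x : ℝ}
    (hx : x ∈ Ioo vmin vmax) : HasDerivAt (ndMoment vmin p μ g) (p * (x * g x)) x :=
  ((hasDerivAt_integral_of_continuousOn_s15 (continuousOn_id.mul hg) hx).const_mul p).const_add _

theorem hasDerivAt_ndExcess (hg : ContinuousOn g (Icc vmin vmax)) {x : ℝ}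
    (hx : x ∈ Ioo vmin vmax) : HasDerivAt (ndExcess vmin p μ g) (ndProb vmin p g x) x :=
  (((hasDerivAt_id' x).mul (hasDerivAt_ndProb hg hx)).sub
    (hasDerivAt_ndMoment hg hx)).congr_deriv (by ring)

theorem hasDerivAt_ndMean (hg : ContinuousOn g (Icc vmin vmax)) {x : ℝ} (hx : x ∈ Ioo vmin vmax)
    (hD : ndProb vmin p g x ≠ 0) :
    HasDerivAt (ndMean vmin p μ g)
      (p * g x * ndExcess vmin p μ g x / ndProb vmin p g x ^ 2) x :=
  ((hasDerivAt_ndMoment hg hx).div (hasDerivAt_ndProb hg hx) hD).congr_deriv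
    (by rw [ndExcess]; ring)

theorem ndExcess_eq (hD : ndProb vmin p g v ≠ 0) :
    ndExcess vmin p μ g v = ndProb vmin p g v * (v - ndMean vmin p μ g v) := by
  rw [ndExcess, ndMean]
  field_simp

theorem ndMean_lt_of_ndExcess_pos (hD : 0 < ndProb vmin p g v)
    (h : 0 < ndExcess vmin p μ g v) : ndMean vmin p μ g v < v :=
  sub_pos.1 (pos_of_mul_pos_right (ndExcess_eq hD.ne' ▸ h) hD.le)

theorem lt_ndMean_of_ndExcess_neg (hD : 0 < ndProb vmin p g v)
    (h : ndExcess vmin p μ g v < 0) : v < ndMean vmin p μ g v :=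
  sub_neg.1 (neg_of_mul_neg_right (ndExcess_eq hD.ne' ▸ h) hD.le)

theorem ndProb_pos (hp0 : 0 ≤ p) (hp1 : p < 1) (hg0 : ∀ x ∈ Icc vmin vmax, 0 ≤ g x)
    (hv : v ∈ Icc vmin vmax) : 0 < ndProb vmin p g v :=
  add_pos_of_pos_of_nonneg (sub_pos.2 hp1)
    (mul_nonneg hp0 (integral_nonneg hv.1 fun x hx => hg0 x ⟨hx.1, hx.2.trans hv.2⟩))

theorem ndExcess_strictMonoOn (hp0 : 0 ≤ p) (hp1 : p < 1) (hg : ContinuousOn g (Icc vmin vmax))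
    (hg0 : ∀ x ∈ Icc vmin vmax, 0 ≤ g x) :
    StrictMonoOn (ndExcess vmin p μ g) (Icc vmin vmax) := by
  refine strictMonoOn_of_hasDerivWithinAt_pos (convex_Icc _ _) ?_
    (fun x hx => (hasDerivAt_ndExcess hg (by rwa [interior_Icc] at hx)).hasDerivWithinAt)
    fun x hx => ndProb_pos hp0 hp1 hg0 (interior_subset hx)
  have hG := continuousOn_primitive_Icc hg
  have hM := continuousOn_primitive_Icc (continuousOn_id.mul hg)
  exact continuousOn_id.mul (continuousOn_const.add (continuousOn_const.mul hG)) |>.sub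
    (continuousOn_const.add (continuousOn_const.mul hM))

theorem ndExcess_le (hp1 : p ≤ 1) (hg : ContinuousOn g (Icc vmin vmax))
    (hg0 : ∀ x ∈ Icc vmin vmax, 0 ≤ g x) (hdens : ∫ t in vmin..vmax, g t = 1)
    (hμ : μ = ∫ t in vmin..vmax, t * g t) (hv : v ∈ Icc vmin vmax) :
    ndExcess vmin p μ g v ≤ v * (∫ t in vmin..v, g t) - ∫ t in vmin..v, t * g t := by
  have hmin : vmin ∈ Icc vmin vmax := ⟨le_rfl, hv.1.trans hv.2⟩
  have hmax : vmax ∈ Icc vmin vmax := ⟨hv.1.trans hv.2, le_rfl⟩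
  have htail := mul_integral_le_integral_mul hv.2 (hg.mono (Icc_subset_Icc_left hv.1))
    fun x hx => hg0 x ⟨hv.1.trans hx.1, hx.2⟩
  have htg : ContinuousOn (fun t => t * g t) (Icc vmin vmax) := continuousOn_id.mul hg
  have hG := integral_add_adjacent_intervals (hg.intervalIntegrable_of_mem_Icc hmin hv)
    (hg.intervalIntegrable_of_mem_Icc hv hmax)
  have hM := integral_add_adjacent_intervals (htg.intervalIntegrable_of_mem_Icc hmin hv)
    (htg.intervalIntegrable_of_mem_Icc hv hmax)
  rw [hdens] at hG
  subst hμ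
  rw [ndExcess, ndProb, ndMoment]
  linear_combination mul_le_mul_of_nonneg_left htail (sub_nonneg.2 hp1) - (1 - p) * v * hG
    + (1 - p) * hM

theorem mul_ndExcess_le_sq (hp0 : 0 ≤ p) (hp1 : p ≤ 1) (hg : ContinuousOn g (Icc vmin vmax))
    (hg0 : ∀ x ∈ Icc vmin vmax, 0 ≤ g x) (hlc : IsLogConcaveOn g (Icc vmin vmax))
    (hdens : ∫ t in vmin..vmax, g t = 1) (hμ : μ = ∫ t in vmin..vmax, t * g t)
    (hv : v ∈ Icc vmin vmax) : p * g v * ndExcess vmin p μ g v ≤ ndProb vmin p g v ^ 2 := by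
  have hG0 : 0 ≤ ∫ t in vmin..v, g t :=
    integral_nonneg hv.1 fun x hx => hg0 x ⟨hx.1, hx.2.trans hv.2⟩
  have hG1 : ∫ t in vmin..v, g t ≤ 1 := hdens ▸ integral_mono_interval le_rfl hv.1 hv.2
    (ae_restrict_of_forall_mem measurableSet_Ioc fun x hx => hg0 x ⟨hx.1.le, hx.2⟩)
    (hg.intervalIntegrable_of_Icc (hv.1.trans hv.2))
  calc p * g v * ndExcess vmin p μ g v
      ≤ p * (g v * (v * (∫ t in vmin..v, g t) - ∫ t in vmin..v, t * g t)) := by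
        rw [mul_assoc]
        exact mul_le_mul_of_nonneg_left (mul_le_mul_of_nonneg_left
          (ndExcess_le hp1 hg hg0 hdens hμ hv) (hg0 v hv)) hp0
    _ ≤ p * (∫ t in vmin..v, g t) ^ 2 :=
        mul_le_mul_of_nonneg_left (hlc.mul_sub_integral_le_sq hg hg0 hv.1 hv.2) hp0
    _ ≤ (∫ t in vmin..v, g t) ^ 2 := mul_le_of_le_one_left (sq_nonneg _) hp1
    _ ≤ ndProb vmin p g v ^ 2 := by
        refine pow_le_pow_left₀ hG0 ?_ 2
        rw [ndProb]
        nlinarith [mul_nonneg (sub_nonneg.2 hp1) (sub_nonneg.2 hG1)]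

theorem sub_ndMean_monotoneOn (hp0 : 0 ≤ p) (hp1 : p < 1) (hg : ContinuousOn g (Icc vmin vmax))
    (hg0 : ∀ x ∈ Icc vmin vmax, 0 ≤ g x) (hlc : IsLogConcaveOn g (Icc vmin vmax))
    (hdens : ∫ t in vmin..vmax, g t = 1) (hμ : μ = ∫ t in vmin..vmax, t * g t) :
    MonotoneOn (fun v => v - ndMean vmin p μ g v) (Ioo vmin vmax) := by
  have hderiv : ∀ x ∈ Ioo vmin vmax, HasDerivAt (fun v => v - ndMean vmin p μ g v)
      (1 - p * g x * ndExcess vmin p μ g x / ndProb vmin p g x ^ 2) x := fun x hx =>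
    (hasDerivAt_id' x).sub
      (hasDerivAt_ndMean hg hx (ndProb_pos hp0 hp1 hg0 (Ioo_subset_Icc_self hx)).ne')
  refine monotoneOn_of_hasDerivWithinAt_nonneg (convex_Ioo _ _)
    (f' := fun x => 1 - p * g x * ndExcess vmin p μ g x / ndProb vmin p g x ^ 2)
    (fun x hx => (hderiv x hx).continuousAt.continuousWithinAt) (fun x hx => ?_) fun x hx => ?_
  · rw [interior_Ioo] at hx ⊢
    exact (hderiv x hx).hasDerivWithinAt
  · rw [interior_Ioo] at hx
    exact sub_nonneg.2 (div_le_one_of_le₀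
      (mul_ndExcess_le_sq hp0 hp1.le hg hg0 hlc hdens hμ (Ioo_subset_Icc_self hx)) (sq_nonneg _))

end LateDisclosure

open LateDisclosure

theorem late_threshold_comparative_statics_in_q_general
    (vmin vmax : ℝ)
    (p : ℝ) (hp : p ∈ Set.Ioo (0:ℝ) 1)
    (g : ℝ → ℝ)
    (hg_cont : ContinuousOn g (Set.Icc vmin vmax))
    (hg_pos : ∀ x ∈ Set.Icc vmin vmax, 0 < g x)
    (hg_density : ∫ t in vmin..vmax, g t = 1)
    (hg_logconcave : ∀ x ∈ Set.Icc vmin vmax, ∀ y ∈ Set.Icc vmin vmax,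
      ∀ a b : ℝ, 0 ≤ a → 0 ≤ b → a + b = 1 →
        g x ^ a * g y ^ b ≤ g (a * x + b * y))
    (G : ℝ → ℝ) (hG : ∀ v, G v = ∫ t in vmin..v, g t)
    (μ : ℝ) (hμ : μ = ∫ t in vmin..vmax, t * g t)
    (vB : ℝ) (hvB_mem : vB ∈ Set.Ioo vmin vmax)
    (hvB : vB * ((1 - p) + p * G vB) = (1 - p) * μ + p * ∫ t in vmin..vB, t * g t)
    (s : ℝ) (hs : s ∈ Set.Icc vmin vmax)
    (vL lam E : ℝ → ℝ)   -- threshold, veracity weight, and E[v|N,∅], as functions of q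
    (hvL_mem : ∀ q ∈ Set.Ioo (0:ℝ) 1, vL q ∈ Set.Icc vmin vmax)
    (hlam : ∀ q ∈ Set.Ioo (0:ℝ) 1, lam q =
      q * (if s < vB then 1 else 1 - p) /
        (q * (if s < vB then 1 else 1 - p) + (1 - q) * (1 - p + p * G (vL q))))
    (hE : ∀ q ∈ Set.Ioo (0:ℝ) 1, E q =
      ((1 - p) * μ + p * ∫ t in vmin..(vL q), t * g t) / (1 - p + p * G (vL q)))
    (hvL : ∀ q ∈ Set.Ioo (0:ℝ) 1, vL q = lam q * s + (1 - lam q) * E q) :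
    StrictMonoOn lam (Set.Ioo (0:ℝ) 1) ∧
    (vB < s → StrictMonoOn vL (Set.Ioo (0:ℝ) 1)) ∧
    (s < vB → StrictAntiOn vL (Set.Ioo (0:ℝ) 1)) ∧
    (vB < s → ∀ q ∈ Set.Ioo (0:ℝ) 1, E q < s) ∧
    (s < vB → ∀ q ∈ Set.Ioo (0:ℝ) 1, s < E q) := by
  obtain rfl : G = fun v => ∫ t in vmin..v, g t := funext hG
  obtain ⟨hp0, hp1⟩ := hp
  have hg0 : ∀ x ∈ Icc vmin vmax, 0 ≤ g x := fun x hx => (hg_pos x hx).le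
  have hD : ∀ q ∈ Ioo (0:ℝ) 1, 0 < ndProb vmin p g (vL q) :=
    fun q hq => ndProb_pos hp0.le hp1 hg0 (hvL_mem q hq)
  have hE_mean : ∀ q ∈ Ioo (0:ℝ) 1, E q = ndMean vmin p μ g (vL q) := hE
  have ha : 0 < if s < vB then (1:ℝ) else 1 - p := by split_ifs <;> linarith
  set a : ℝ := if s < vB then 1 else 1 - p
  have hR : IsRootFamily (Icc vmin vmax) (ndExcess vmin p μ g) vL a vB s :=
    ⟨ndExcess_strictMonoOn hp0.le hp1 hg_cont hg0, sub_eq_zero.2 hvB,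
      Ioo_subset_Icc_self hvB_mem, hs, hvL_mem, ha, fun q hq =>
        one_sub_mul_sub_eq_of_eq_convex_comb (hD q hq).ne'
          (add_pos (mul_pos hq.1 ha) (mul_pos (sub_pos.2 hq.2) (hD q hq))).ne'
          (by have := hvL q hq; rwa [hlam q hq, hE q hq] at this)⟩
  have hgap := sub_ndMean_monotoneOn hp0.le hp1 hg_cont hg0 hg_logconcave hg_density hμ
  have hcomb : ∀ q ∈ Ioo (0:ℝ) 1, vL q = lam q * s + (1 - lam q) * ndMean vmin p μ g (vL q) :=
    fun q hq => hE_mean q hq ▸ hvL q hq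
  have hmean_lt (h : vB < s) (q) (hq : q ∈ Ioo (0:ℝ) 1) : ndMean vmin p μ g (vL q) < vL q :=
    ndMean_lt_of_ndExcess_pos (hD q hq) (hR.apply_eq_zero ▸
      hR.strictMonoOn hR.vB_mem (hvL_mem q hq) (hR.mapsTo_Ioo_of_lt h hq).1)
  have hlt_mean (h : s < vB) (q) (hq : q ∈ Ioo (0:ℝ) 1) : vL q < ndMean vmin p μ g (vL q) :=
    lt_ndMean_of_ndExcess_neg (hD q hq) (hR.apply_eq_zero ▸
      hR.strictMonoOn (hvL_mem q hq) hR.vB_mem (hR.mapsTo_Ioo_of_gt h hq).2)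
  refine ⟨?_, hR.strictMonoOn_of_lt, hR.strictAntiOn_of_gt,
    fun h q hq => hE_mean q hq ▸ (hmean_lt h q hq).trans (hR.mapsTo_Ioo_of_lt h hq).2,
    fun h q hq => hE_mean q hq ▸ (hR.mapsTo_Ioo_of_gt h hq).1.trans (hlt_mean h q hq)⟩
  rcases lt_trichotomy s vB with h | rfl | h
  · exact strictMonoOn_weight_of_strictAntiOn hcomb (hR.strictAntiOn_of_gt h)
      ((hR.mapsTo_Ioo_of_gt h).mono_right (Ioo_subset_Ioo hs.1 hvB_mem.2.le))
      (fun q hq => (hR.mapsTo_Ioo_of_gt h hq).1) (hlt_mean h) hgap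
  · intro q₁ hq₁ q₂ hq₂ hq
    rw [hlam q₁ hq₁, hlam q₂ hq₂, hR.eq_of_eq hq₁, hR.eq_of_eq hq₂]
    exact strictMonoOn_posterior ha (ndProb_pos hp0.le hp1 hg0 hs) hq₁ hq₂ hq
  · exact strictMonoOn_weight_of_strictMonoOn hcomb (hR.strictMonoOn_of_lt h)
      ((hR.mapsTo_Ioo_of_lt h).mono_right (Ioo_subset_Ioo hvB_mem.1.le hs.2))
      (fun q hq => (hR.mapsTo_Ioo_of_lt h hq).2) (hmean_lt h) hgap

/-- the late-disclosure threshold v^L(s), viewed as a function of q,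
is increasing in q when s > v^B and decreasing when s < v^B. Writing
v^L = λ(q)·s + (1-λ(q))·E[v|N,∅] with λ(q) = Pr(V|s,∅) strictly increasing in q:
if s > E[v|N,∅] then v^L increases in q, if s < E[v|N,∅] it decreases, and
s ≷ v^B implies s ≷ E[v|N,∅]. -/
theorem late_threshold_comparative_statics_in_q
    (vmin vmax : ℝ) (hv : vmin < vmax)
    (p : ℝ) (hp : p ∈ Set.Ioo (0:ℝ) 1)
    (g : ℝ → ℝ)
    (hg_cont : ContinuousOn g (Set.Icc vmin vmax))
    (hg_pos : ∀ x ∈ Set.Icc vmin vmax, 0 < g x)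
    (hg_density : ∫ t in vmin..vmax, g t = 1)
    (hg_logconcave : ∀ x ∈ Set.Icc vmin vmax, ∀ y ∈ Set.Icc vmin vmax,
      ∀ a b : ℝ, 0 ≤ a → 0 ≤ b → a + b = 1 →
        g x ^ a * g y ^ b ≤ g (a * x + b * y))
    (G : ℝ → ℝ) (hG : ∀ v, G v = ∫ t in vmin..v, g t)
    (μ : ℝ) (hμ : μ = ∫ t in vmin..vmax, t * g t)
    (vB : ℝ) (hvB_mem : vB ∈ Set.Ioo vmin vmax)
    (hvB : vB * ((1 - p) + p * G vB) = (1 - p) * μ + p * ∫ t in vmin..vB, t * g t)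
    (s : ℝ) (hs : s ∈ Set.Icc vmin vmax)
    (vL lam E : ℝ → ℝ)   -- threshold, veracity weight, and E[v|N,∅], as functions of q
    (hvL_mem : ∀ q ∈ Set.Ioo (0:ℝ) 1, vL q ∈ Set.Icc vmin vmax)
    (hlam : ∀ q ∈ Set.Ioo (0:ℝ) 1, lam q =
      q * (if s < vB then 1 else 1 - p) /
        (q * (if s < vB then 1 else 1 - p) + (1 - q) * (1 - p + p * G (vL q))))
    (hE : ∀ q ∈ Set.Ioo (0:ℝ) 1, E q =
      ((1 - p) * μ + p * ∫ t in vmin..(vL q), t * g t) / (1 - p + p * G (vL q)))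
    (hvL : ∀ q ∈ Set.Ioo (0:ℝ) 1, vL q = lam q * s + (1 - lam q) * E q) :
    StrictMonoOn lam (Set.Ioo (0:ℝ) 1) ∧
    (vB < s → StrictMonoOn vL (Set.Ioo (0:ℝ) 1)) ∧
    (s < vB → StrictAntiOn vL (Set.Ioo (0:ℝ) 1)) ∧
    (vB < s → ∀ q ∈ Set.Ioo (0:ℝ) 1, E q < s) ∧
    (s < vB → ∀ q ∈ Set.Ioo (0:ℝ) 1, s < E q) :=
  late_threshold_comparative_statics_in_q_general vmin vmax p hp g hg_cont hg_pos hg_density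
    hg_logconcave G hG μ hμ vB hvB_mem hvB s hs vL lam E hvL_mem hlam hE hvL
end
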